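/- arXiv:2207.02136 — 6 statements merged into one kernel-verified Lean document; each statement's English description precedes it below -/
import Mathlib

section
/- For any integer-valued circulation X on a finite directed graph G (i.e., a function X : E → ℤ satisfying conservation of flow at every vertex), there exists a circulation Y : E → ℤ such that Y(e) ∈ {-1, 0, 1} for every edge e, and X(e) and Y(e) have the same parity for every edge e. -/
open Finset

/-- `X : E → ℤ` is a circulation on the directed graph with edge-source map `src`
and edge-target map `tgt`: at every vertex the incoming values sum to the outgoing values. -/
def IsCircZ {V E : Type} [Fintype E] [DecidableEq V] (src tgt : E → V) (X : E → ℤ) : Prop :=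
  ∀ v : V, (∑ e, if tgt e = v then X e else 0) = ∑ e, if src e = v then X e else 0

section Aux

variable {V E : Type} [Fintype E] [DecidableEq V] (src tgt : E → V)

/-- Divergence of an integer edge-function at a vertex. -/
def dvg (Z : E → ℤ) (v : V) : ℤ :=
  (∑ e, if tgt e = v then Z e else 0) - (∑ e, if src e = v then Z e else 0)

lemma isCircZ_iff_dvg (X : E → ℤ) :
    IsCircZ src tgt X ↔ ∀ v, dvg src tgt X v = 0 := by
  unfold IsCircZ dvg
  constructor <;> intro h v <;> have := h v <;> omega

/-- Invariant: `P e` lies between `0` and `X e`. -/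
def Btwn (X P : E → ℤ) (e : E) : Prop :=
  (0 ≤ P e ∧ P e ≤ X e) ∨ (X e ≤ P e ∧ P e ≤ 0)

lemma dvg_update [DecidableEq E] (Z : E → ℤ) (f : E) (c : ℤ) (w : V) :
    dvg src tgt (fun e => if e = f then Z e - c else Z e) w
      = dvg src tgt Z w - ((if tgt f = w then c else 0) - (if src f = w then c else 0)) := by
  unfold dvg
  have h1 : ∀ (g : E → V), (∑ e, if g e = w then (if e = f then Z e - c else Z e) else 0)
      = (∑ e, if g e = w then Z e else 0) - (if g f = w then c else 0) := by
    intro g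
    have key : ∀ e, (if g e = w then (if e = f then Z e - c else Z e) else 0)
        = (if g e = w then Z e else 0) - (if e = f then (if g e = w then c else 0) else 0) := by
      intro e
      by_cases h : e = f
      · subst h; by_cases h2 : g e = w <;> simp [h2]
      · simp [h]
    rw [Finset.sum_congr rfl (fun e _ => key e), Finset.sum_sub_distrib,
      Finset.sum_ite_eq' Finset.univ f (fun e => if g e = w then c else 0)]
    simp
  rw [h1 tgt, h1 src]
  ring

lemma step_arith {α : Type} (inst : DecidableEq α) (v s t w : α) (ht : t ≠ v) :
    (if w = v then (-1:ℤ) else 0) + (if w = s then 1 else 0)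
      - ((if t = w then 1 else 0) - (if v = w then 1 else 0))
    = (if w = t then -1 else 0) + (if w = s then 1 else 0) := by
  by_cases h1 : w = v <;> by_cases h2 : w = s <;> by_cases h3 : w = t <;>
    simp_all [eq_comm]

lemma step_arith' {α : Type} (inst : DecidableEq α) (v s t w : α) (ht : t ≠ v) :
    (if w = v then (-1:ℤ) else 0) + (if w = s then 1 else 0)
      - ((if v = w then -1 else 0) - (if t = w then -1 else 0))
    = (if w = t then -1 else 0) + (if w = s then 1 else 0) := by
  by_cases h1 : w = v <;> by_cases h2 : w = s <;> by_cases h3 : w = t <;>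
    simp_all [eq_comm]

lemma walk (X : E → ℤ) (e0 : E) (s : V)
    (h0 : (src e0 = s ∧ 0 ≤ X e0) ∨ (tgt e0 = s ∧ X e0 ≤ 0)) :
    ∀ n (P : E → ℤ) (v : V),
      (∑ e, (X e - P e).natAbs) ≤ n →
      (∀ e, Btwn X P e) →
      (∀ w, dvg src tgt (fun e => X e - P e) w
          = (if w = v then -1 else 0) + (if w = s then 1 else 0)) →
      ∃ P', (∀ e, Btwn X P' e) ∧ (∀ w, dvg src tgt (fun e => X e - P' e) w = 0)
        ∧ P' e0 = P e0 := by
  classical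
  intro n
  induction n with
  | zero =>
    intro P v hsum hinv hdvg
    have hz : ∀ e, X e - P e = 0 := by
      intro e
      have h1 : (X e - P e).natAbs ≤ 0 := le_trans
        (Finset.single_le_sum (f := fun e => (X e - P e).natAbs)
          (fun i _ => Nat.zero_le _) (mem_univ e)) hsum
      omega
    have hzero : ∀ w, dvg src tgt (fun e => X e - P e) w = 0 := by
      intro w; simp [dvg, hz]
    exact ⟨P, hinv, hzero, rfl⟩
  | succ n ih =>
    intro P v hsum hinv hdvg
    by_cases hvs : v = s
    · refine ⟨P, hinv, ?_, rfl⟩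
      intro w
      have h := hdvg w
      rw [hvs] at h
      rw [h]
      by_cases hws : w = s <;> simp [hws]
    · have hdv := hdvg v
      rw [if_pos rfl, if_neg hvs] at hdv
      simp only [dvg] at hdv
      have hpos : (∑ e : E, (0:ℤ)) < ∑ e, ((if src e = v then X e - P e else 0)
          - (if tgt e = v then X e - P e else 0)) := by
        rw [Finset.sum_sub_distrib]
        simp only [Finset.sum_const_zero]
        omega
      obtain ⟨f, -, hf⟩ := Finset.exists_lt_of_sum_lt hpos
      by_cases h1 : src f = v
      · -- forward step along f
        have h2 : tgt f ≠ v := by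
          intro h2; rw [if_pos h1, if_pos h2] at hf; omega
        have hZf : 1 ≤ X f - P f := by rw [if_pos h1, if_neg h2] at hf; omega
        have hfe0 : f ≠ e0 := by
          intro h; subst h
          rcases h0 with ⟨ha, _⟩ | ⟨_, hb⟩
          · exact hvs (by rw [← h1, ha])
          · have := hinv f; unfold Btwn at this; omega
        set P' : E → ℤ := fun e => if e = f then P f + 1 else P e with hP'def
        have hXP' : ∀ e, X e - P' e = if e = f then (X e - P e) - 1 else X e - P e := by
          intro e
          by_cases h : e = f
          · subst h
            simp only [hP'def]
            simp only [if_true]; ring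
          · simp [hP'def, h]
        have hinv' : ∀ e, Btwn X P' e := by
          intro e
          have hb := hinv e
          unfold Btwn at hb ⊢
          by_cases h : e = f
          · subst h; simp only [hP'def, if_pos rfl]; omega
          · simpa [hP'def, h] using hb
        have hdvg' : ∀ w, dvg src tgt (fun e => X e - P' e) w
            = (if w = tgt f then -1 else 0) + (if w = s then 1 else 0) := by
          intro w
          have heq : (fun e => X e - P' e)
              = (fun e => if e = f then (X e - P e) - 1 else (X e - P e)) := funext hXP'
          rw [heq, dvg_update src tgt (fun e => X e - P e) f 1 w, hdvg w, h1]
          exact step_arith _ v s (tgt f) w h2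
        have hsum' : (∑ e, (X e - P' e).natAbs) ≤ n := by
          have hlt : (∑ e, (X e - P' e).natAbs) < ∑ e, (X e - P e).natAbs := by
            apply Finset.sum_lt_sum
            · intro e _
              rw [hXP' e]
              by_cases h : e = f
              · subst h; rw [if_pos rfl]; omega
              · rw [if_neg h]
            · refine ⟨f, mem_univ f, ?_⟩
              rw [hXP' f, if_pos rfl]
              omega
          omega
        obtain ⟨P'', hi'', hd'', he''⟩ := ih P' (tgt f) hsum' hinv' hdvg'
        refine ⟨P'', hi'', hd'', ?_⟩
        rw [he'']
        simp [hP'def, Ne.symm hfe0]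
      · -- backward step along f
        have h2 : tgt f = v := by
          by_contra h2; rw [if_neg h1, if_neg h2] at hf; omega
        have hZf : X f - P f ≤ -1 := by rw [if_neg h1, if_pos h2] at hf; omega
        have hfe0 : f ≠ e0 := by
          intro h; subst h
          rcases h0 with ⟨_, ha⟩ | ⟨hb, _⟩
          · have := hinv f; unfold Btwn at this; omega
          · exact hvs (by rw [← h2, hb])
        set P' : E → ℤ := fun e => if e = f then P f - 1 else P e with hP'def
        have hXP' : ∀ e, X e - P' e = if e = f then (X e - P e) - (-1) else X e - P e := by
          intro e
          by_cases h : e = f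
          · subst h
            simp only [hP'def]
            simp only [if_true]; ring
          · simp [hP'def, h]
        have hinv' : ∀ e, Btwn X P' e := by
          intro e
          have hb := hinv e
          unfold Btwn at hb ⊢
          by_cases h : e = f
          · subst h; simp only [hP'def, if_pos rfl]; omega
          · simpa [hP'def, h] using hb
        have hdvg' : ∀ w, dvg src tgt (fun e => X e - P' e) w
            = (if w = src f then -1 else 0) + (if w = s then 1 else 0) := by
          intro w
          have heq : (fun e => X e - P' e)
              = (fun e => if e = f then (X e - P e) - (-1) else (X e - P e)) := funext hXP'
          rw [heq, dvg_update src tgt (fun e => X e - P e) f (-1) w, hdvg w, h2]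
          exact step_arith' _ v s (src f) w h1
        have hsum' : (∑ e, (X e - P' e).natAbs) ≤ n := by
          have hlt : (∑ e, (X e - P' e).natAbs) < ∑ e, (X e - P e).natAbs := by
            apply Finset.sum_lt_sum
            · intro e _
              rw [hXP' e]
              by_cases h : e = f
              · subst h; rw [if_pos rfl]; omega
              · rw [if_neg h]
            · refine ⟨f, mem_univ f, ?_⟩
              rw [hXP' f, if_pos rfl]
              omega
          omega
        obtain ⟨P'', hi'', hd'', he''⟩ := ih P' (src f) hsum' hinv' hdvg'
        refine ⟨P'', hi'', hd'', ?_⟩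
        rw [he'']
        simp [hP'def, Ne.symm hfe0]

end Aux

section Main

variable {V E : Type} [Fintype E] [DecidableEq V] (src tgt : E → V)

lemma dvg_sub (A B : E → ℤ) (w : V) :
    dvg src tgt (fun e => A e - B e) w = dvg src tgt A w - dvg src tgt B w := by
  unfold dvg
  have key : ∀ (g : E → V) (e : E), (if g e = w then A e - B e else 0)
      = (if g e = w then A e else 0) - (if g e = w then B e else 0) := by
    intro g e; by_cases h : g e = w <;> simp [h]
  rw [Finset.sum_congr rfl (fun e _ => key tgt e), Finset.sum_congr rfl (fun e _ => key src e),
    Finset.sum_sub_distrib, Finset.sum_sub_distrib]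
  ring

lemma dvg_two_smul (A : E → ℤ) (w : V) :
    dvg src tgt (fun e => 2 * A e) w = 2 * dvg src tgt A w := by
  unfold dvg
  have key : ∀ (g : E → V) (e : E), (if g e = w then 2 * A e else 0)
      = 2 * (if g e = w then A e else 0) := by
    intro g e; by_cases h : g e = w <;> simp [h]
  rw [Finset.sum_congr rfl (fun e _ => key tgt e), Finset.sum_congr rfl (fun e _ => key src e)]
  rw [← Finset.mul_sum, ← Finset.mul_sum]
  ring

lemma reduce (X : E → ℤ) (hX : IsCircZ src tgt X) (e0 : E) (h2 : 2 ≤ (X e0).natAbs) :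
    ∃ X', IsCircZ src tgt X' ∧ (∀ e, X' e % 2 = X e % 2) ∧
      (∑ e, (X' e).natAbs) < ∑ e, (X e).natAbs := by
  classical
  have hXd := (isCircZ_iff_dvg src tgt X).1 hX
  rcases le_or_gt 0 (X e0) with hs | hs
  · -- X e0 ≥ 2
    have hX2 : 2 ≤ X e0 := by omega
    set P0 : E → ℤ := fun e => if e = e0 then 1 else 0 with hP0def
    have h0 : (src e0 = src e0 ∧ 0 ≤ X e0) ∨ (tgt e0 = src e0 ∧ X e0 ≤ 0) :=
      Or.inl ⟨rfl, hs⟩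
    have hXP0 : ∀ e, X e - P0 e = if e = e0 then X e - 1 else X e := by
      intro e; by_cases h : e = e0 <;> simp [hP0def, h]
    have hinv0 : ∀ e, Btwn X P0 e := by
      intro e; unfold Btwn
      by_cases h : e = e0
      · subst h; simp only [hP0def, if_pos rfl]; omega
      · simp only [hP0def, if_neg h]; omega
    have hdvg0 : ∀ w, dvg src tgt (fun e => X e - P0 e) w
        = (if w = tgt e0 then -1 else 0) + (if w = src e0 then 1 else 0) := by
      intro w
      have heq : (fun e => X e - P0 e) = (fun e => if e = e0 then X e - 1 else X e) :=
        funext hXP0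
      rw [heq, dvg_update src tgt X e0 1 w, hXd w]
      by_cases ha : w = tgt e0 <;> by_cases hb : w = src e0 <;>
        simp_all [eq_comm]
    obtain ⟨P', hinvP, hdP, hPe0⟩ :=
      walk src tgt X e0 (src e0) h0 (∑ e, (X e - P0 e).natAbs) P0 (tgt e0)
        le_rfl hinv0 hdvg0
    have hP'e0 : P' e0 = 1 := by rw [hPe0]; simp [hP0def]
    have hdvgP' : ∀ w, dvg src tgt P' w = 0 := by
      intro w
      have := dvg_sub src tgt X P' w
      rw [hdP w, hXd w] at this
      omega
    refine ⟨fun e => X e - 2 * P' e, ?_, ?_, ?_⟩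
    · rw [isCircZ_iff_dvg]
      intro w
      rw [dvg_sub src tgt X (fun e => 2 * P' e) w, hXd w, dvg_two_smul src tgt P' w, hdvgP' w]
      ring
    · intro e
      show (X e - 2 * P' e) % 2 = X e % 2
      omega
    · apply Finset.sum_lt_sum
      · intro e _
        show (X e - 2 * P' e).natAbs ≤ (X e).natAbs
        have := hinvP e; unfold Btwn at this; omega
      · refine ⟨e0, mem_univ e0, ?_⟩
        show (X e0 - 2 * P' e0).natAbs < (X e0).natAbs
        rw [hP'e0]; omega
  · -- X e0 ≤ -2
    have hX2 : X e0 ≤ -2 := by omega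
    set P0 : E → ℤ := fun e => if e = e0 then -1 else 0 with hP0def
    have h0 : (src e0 = tgt e0 ∧ 0 ≤ X e0) ∨ (tgt e0 = tgt e0 ∧ X e0 ≤ 0) :=
      Or.inr ⟨rfl, by omega⟩
    have hXP0 : ∀ e, X e - P0 e = if e = e0 then X e - (-1) else X e := by
      intro e; by_cases h : e = e0 <;> simp [hP0def, h]
    have hinv0 : ∀ e, Btwn X P0 e := by
      intro e; unfold Btwn
      by_cases h : e = e0
      · subst h; simp only [hP0def, if_pos rfl]; omega
      · simp only [hP0def, if_neg h]; omega
    have hdvg0 : ∀ w, dvg src tgt (fun e => X e - P0 e) w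
        = (if w = src e0 then -1 else 0) + (if w = tgt e0 then 1 else 0) := by
      intro w
      have heq : (fun e => X e - P0 e) = (fun e => if e = e0 then X e - (-1) else X e) :=
        funext hXP0
      rw [heq, dvg_update src tgt X e0 (-1) w, hXd w]
      by_cases ha : w = tgt e0 <;> by_cases hb : w = src e0 <;>
        simp_all [eq_comm]
    obtain ⟨P', hinvP, hdP, hPe0⟩ :=
      walk src tgt X e0 (tgt e0) h0 (∑ e, (X e - P0 e).natAbs) P0 (src e0)
        le_rfl hinv0 hdvg0
    have hP'e0 : P' e0 = -1 := by rw [hPe0]; simp [hP0def]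
    have hdvgP' : ∀ w, dvg src tgt P' w = 0 := by
      intro w
      have := dvg_sub src tgt X P' w
      rw [hdP w, hXd w] at this
      omega
    refine ⟨fun e => X e - 2 * P' e, ?_, ?_, ?_⟩
    · rw [isCircZ_iff_dvg]
      intro w
      rw [dvg_sub src tgt X (fun e => 2 * P' e) w, hXd w, dvg_two_smul src tgt P' w, hdvgP' w]
      ring
    · intro e
      show (X e - 2 * P' e) % 2 = X e % 2
      omega
    · apply Finset.sum_lt_sum
      · intro e _
        show (X e - 2 * P' e).natAbs ≤ (X e).natAbs
        have := hinvP e; unfold Btwn at this; omega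
      · refine ⟨e0, mem_univ e0, ?_⟩
        show (X e0 - 2 * P' e0).natAbs < (X e0).natAbs
        rw [hP'e0]; omega

end Main

/-- For any integer circulation `X` there is a unitary circulation `Y`
(values in `{-1,0,1}`) with the same parity as `X` on every edge. -/
theorem stmt_0 {V E : Type} [Fintype E] [DecidableEq V] (src tgt : E → V)
    (X : E → ℤ) (hX : IsCircZ src tgt X) :
    ∃ Y : E → ℤ, IsCircZ src tgt Y ∧ (∀ e, |Y e| ≤ 1) ∧ (∀ e, X e % 2 = Y e % 2) := by
  classical
  suffices H : ∀ n (X : E → ℤ), (∑ e, (X e).natAbs) ≤ n → IsCircZ src tgt X →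
      ∃ Y : E → ℤ, IsCircZ src tgt Y ∧ (∀ e, |Y e| ≤ 1) ∧ (∀ e, X e % 2 = Y e % 2) by
    exact H _ X le_rfl hX
  intro n
  induction n using Nat.strong_induction_on with
  | _ n ih =>
    intro X hn hXc
    by_cases hall : ∀ e, (X e).natAbs ≤ 1
    · refine ⟨X, hXc, fun e => ?_, fun e => rfl⟩
      have := hall e
      rw [abs_le]
      omega
    · push_neg at hall
      obtain ⟨e0, he0⟩ := hall
      obtain ⟨X', hX'c, hX'par, hX'lt⟩ := reduce src tgt X hXc e0 (by omega)
      have hlt : (∑ e, (X' e).natAbs) < n := lt_of_lt_of_le hX'lt hn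
      obtain ⟨Y, hYc, hYu, hYpar⟩ := ih _ hlt X' le_rfl hX'c
      exact ⟨Y, hYc, hYu, fun e => by rw [← hYpar e, hX'par e]⟩
end

section
/- Any nonzero integer-valued circulation X on a finite directed graph can be written as X = Σ_{i=0}^{k} 2^i · Y_i, where k = ⌈log₂ ‖X‖⌉, ‖X‖ = max_e |X(e)|, and each Y_i is a circulation with |Y_i(e)| ≤ 1 for all edges e. -/
open Finset

/-- The infinity norm of a circulation: the maximum absolute value over all edges. -/
def circNorm {E : Type} [Fintype E] (X : E → ℤ) : ℕ :=
  Finset.univ.sup fun e => (X e).natAbs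

/-
Reduced mod 2, a circulation `X` becomes a `ZMod 2`-circulation. Any `W : E → ZMod 2` with net
flow `δ_b - δ_a` lifts to an integer `Z` with values in `{-1, 0, 1}` and the same net flow: orient
an edge of the support of `W` at `a` away from `a`, and lift the rest of `W`, which is a
`ZMod 2`-flow from the other end of that edge to `b`. Such a lift `Y` of `X mod 2` is a signed
circulation, `(X - Y) / 2` is a circulation of norm at most `2 ^ k` when `‖X‖ ≤ 2 ^ (k + 1)`, and
induction on `k` gives the binary expansion.
-/

section NetFlow

variable {V E : Type*} [Fintype E] [DecidableEq V]

def netFlow (src tgt : E → V) (M : Type*) [AddCommGroup M] : (E → M) →+ (V → M) :=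
  AddMonoidHom.mk' (fun X => ∑ e, (Pi.single (tgt e) (X e) - Pi.single (src e) (X e)))
    fun X Y => by
      simp only [Pi.add_apply, Pi.single_add, ← sum_add_distrib]
      exact sum_congr rfl fun _ _ => by abel

variable {src tgt : E → V} {M : Type*} [AddCommGroup M]

theorem netFlow_apply (X : E → M) :
    netFlow src tgt M X = ∑ e, (Pi.single (tgt e) (X e) - Pi.single (src e) (X e)) := rfl

theorem netFlow_single [DecidableEq E] (e : E) (m : M) :
    netFlow src tgt M (Pi.single e m) = Pi.single (tgt e) m - Pi.single (src e) m := by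
  rw [netFlow_apply, sum_eq_single e (fun e' _ he' => by simp [he']) (by simp)]
  simp

theorem netFlow_comp {N : Type*} [AddCommGroup N] (f : M →+ N) (X : E → M) :
    netFlow src tgt N (f ∘ X) = f ∘ netFlow src tgt M X := by
  ext v
  simp [netFlow_apply, Pi.single_apply, apply_ite f]

theorem exists_incident_of_netFlow_ne_zero {X : E → M} {v : V}
    (h : netFlow src tgt M X v ≠ 0) : ∃ e, X e ≠ 0 ∧ (src e = v ∨ tgt e = v) := by
  contrapose! h
  rw [netFlow_apply, Finset.sum_apply]
  refine sum_eq_zero fun e _ => ?_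
  by_cases he : X e = 0
  · simp [he]
  · obtain ⟨hs, ht⟩ := h e he
    simp [Ne.symm hs, Ne.symm ht]

theorem exists_netFlow_single_eq [DecidableEq E] {e : E} {a : V} (h : src e = a ∨ tgt e = a) :
    ∃ (c : V) (σ : ℤ), |σ| = 1 ∧ ∀ (R : Type*) [Ring R],
      netFlow src tgt R (Pi.single e (σ : R)) = Pi.single c 1 - Pi.single a 1 := by
  rcases h with rfl | rfl
  · exact ⟨tgt e, 1, abs_one, fun R _ => by rw [Int.cast_one, netFlow_single]⟩
  · refine ⟨src e, -1, by simp, fun R _ => ?_⟩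
    rw [Int.cast_neg, Int.cast_one, netFlow_single, Pi.single_neg, Pi.single_neg, neg_sub_neg]

theorem card_support_sub_single_lt [DecidableEq E] [DecidableEq M] (W : E → M) {e : E}
    (he : W e ≠ 0) : #{e' | (W - Pi.single e (W e) : E → M) e' ≠ 0} < #{e' | W e' ≠ 0} := by
  have : ({e' | (W - Pi.single e (W e) : E → M) e' ≠ 0} : Finset E) =
      ({e' | W e' ≠ 0} : Finset E).erase e := by
    ext e'
    by_cases h : e' = e
    · subst h; simp
    · simp [h]
  rw [this]
  exact card_erase_lt_of_mem (by simpa using he)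

theorem netFlow_intCast {R : Type*} [Ring R] (X : E → ℤ) :
    netFlow src tgt R (fun e => (X e : R)) = fun v => (netFlow src tgt ℤ X v : R) :=
  netFlow_comp (Int.castAddHom R) X

end NetFlow

theorem isCircZ_iff_netFlow_eq_zero {V E : Type} [Fintype E] [DecidableEq V] {src tgt : E → V}
    {X : E → ℤ} :
    IsCircZ src tgt X ↔ netFlow src tgt ℤ X = 0 := by
  simp only [IsCircZ, funext_iff, netFlow_apply, sum_sub_distrib, Finset.sum_apply,
    Pi.single_apply, sub_eq_zero, eq_comm (b := tgt _), eq_comm (b := src _)]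

theorem ZMod.eq_one_of_ne_zero_two {x : ZMod 2} (h : x ≠ 0) : x = 1 := by
  revert x; decide

theorem Int.eq_zero_of_abs_le_one_of_two_dvd {z : ℤ} (h : |z| ≤ 1) (h2 : (2 : ℤ) ∣ z) : z = 0 := by
  obtain ⟨k, rfl⟩ := h2
  rw [abs_le] at h
  omega

section SignedLift

variable {E : Type*}

def IsSignedLift (Z : E → ℤ) (W : E → ZMod 2) : Prop :=
  ∀ e, |Z e| ≤ 1 ∧ (Z e : ZMod 2) = W e

theorem IsSignedLift.add_single [DecidableEq E] {Z : E → ℤ} {W : E → ZMod 2} {e : E} {σ : ℤ}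
    (hZ : IsSignedLift Z (W - Pi.single e 1)) (hσ : |σ| = 1) (hWe : W e = 1) :
    IsSignedLift (Z + Pi.single e σ) W := by
  intro e'
  by_cases h : e' = e
  · subst h
    have hZe : Z e' = 0 := Int.eq_zero_of_abs_le_one_of_two_dvd (hZ e').1
      ((ZMod.intCast_zmod_eq_zero_iff_dvd _ 2).mp (by simp [(hZ e').2, hWe]))
    have hσ2 : (σ : ZMod 2) = 1 := by rw [← ZMod.intCast_abs_mod_two, hσ, Int.cast_one]
    simp [hZe, hσ, hσ2, hWe]
  · simpa [h] using hZ e'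

end SignedLift

section Lift

variable {V E : Type*} [Fintype E] [DecidableEq V] {src tgt : E → V}

-- If `a = b` the prescribed net flow is zero, so both ends may be moved to any edge of the support.
theorem exists_incident_support_edge {W : E → ZMod 2} {a b : V} (hW0 : W ≠ 0)
    (hW : netFlow src tgt (ZMod 2) W = Pi.single b 1 - Pi.single a 1) :
    ∃ e a₀ b₀, W e ≠ 0 ∧ (src e = a₀ ∨ tgt e = a₀) ∧ (a₀ = a ∧ b₀ = b ∨ a = b ∧ a₀ = b₀) := by
  by_cases hab : a = b
  · obtain ⟨e, he⟩ := Function.ne_iff.mp hW0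
    exact ⟨e, src e, src e, he, Or.inl rfl, Or.inr ⟨hab, rfl⟩⟩
  · obtain ⟨e, he, hinc⟩ := exists_incident_of_netFlow_ne_zero
      (by simp [hW, Ne.symm hab] : netFlow src tgt (ZMod 2) W a ≠ 0)
    exact ⟨e, a, b, he, hinc, Or.inl ⟨rfl, rfl⟩⟩

theorem exists_signedLift [DecidableEq E] (W : E → ZMod 2) (a b : V)
    (hW : netFlow src tgt (ZMod 2) W = Pi.single b 1 - Pi.single a 1) :
    ∃ Z : E → ℤ, IsSignedLift Z W ∧ netFlow src tgt ℤ Z = Pi.single b 1 - Pi.single a 1 := by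
  by_cases hW0 : W = 0
  · obtain rfl : a = b := by
      by_contra hab
      simpa [hW0, Pi.single_apply, Ne.symm hab] using congrFun hW a
    exact ⟨0, fun e => by simp [hW0], by simp⟩
  obtain ⟨e, a₀, b₀, hWe, hinc, hends⟩ := exists_incident_support_edge hW0 hW
  have hδ : ∀ (R : Type) [Ring R],
      (Pi.single b 1 - Pi.single a 1 : V → R) = Pi.single b₀ 1 - Pi.single a₀ 1 := by
    rcases hends with ⟨rfl, rfl⟩ | ⟨rfl, rfl⟩ <;> simp
  rw [hδ] at hW ⊢
  obtain ⟨c, σ, hσ, hσflow⟩ := exists_netFlow_single_eq hinc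
  have hσflow₂ := hσflow (ZMod 2)
  rw [← ZMod.intCast_abs_mod_two, hσ, Int.cast_one] at hσflow₂
  have hWe1 : W e = 1 := ZMod.eq_one_of_ne_zero_two hWe
  set W' : E → ZMod 2 := W - Pi.single e 1
  have hW' : netFlow src tgt (ZMod 2) W' = Pi.single b₀ 1 - Pi.single c 1 := by
    rw [map_sub, hW, hσflow₂, sub_sub_sub_cancel_right]
  have hcard : #{e | W' e ≠ 0} < #{e | W e ≠ 0} := by
    simpa only [hWe1] using card_support_sub_single_lt W hWe
  obtain ⟨Z', hZ', hZ'flow⟩ := exists_signedLift W' c b₀ hW'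
  refine ⟨Z' + Pi.single e σ, hZ'.add_single hσ hWe1, ?_⟩
  rw [map_add, hZ'flow, show netFlow src tgt ℤ (Pi.single e σ) = _ from hσflow ℤ,
    sub_add_sub_cancel]
termination_by #{e | W e ≠ 0}

end Lift

section Expansion

variable {V E : Type*} [Fintype E] [DecidableEq V] {src tgt : E → V}

theorem exists_unitary_circulation_two_dvd_sub {X : E → ℤ} (hX : netFlow src tgt ℤ X = 0) :
    ∃ Y : E → ℤ, netFlow src tgt ℤ Y = 0 ∧ (∀ e, |Y e| ≤ 1) ∧ ∀ e, (2 : ℤ) ∣ X e - Y e := by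
  classical
  rcases isEmpty_or_nonempty V with hV | ⟨⟨a⟩⟩
  · have := src.isEmpty
    exact ⟨0, map_zero _, isEmptyElim, isEmptyElim⟩
  obtain ⟨Y, hYX, hY⟩ := exists_signedLift (fun e => (X e : ZMod 2)) a a
    (by rw [netFlow_intCast, hX, sub_self]; rfl)
  exact ⟨Y, by rwa [sub_self] at hY, fun e => (hYX e).1,
    fun e => (ZMod.intCast_eq_intCast_iff_dvd_sub _ _ 2).mp (hYX e).2⟩

theorem exists_binary_expansion (k : ℕ) {X : E → ℤ} (hX : netFlow src tgt ℤ X = 0)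
    (hXk : ∀ e, |X e| ≤ 2 ^ k) :
    ∃ Y : Fin (k + 1) → E → ℤ, (∀ i, netFlow src tgt ℤ (Y i) = 0) ∧ (∀ i e, |Y i e| ≤ 1) ∧
      ∀ e, X e = ∑ i : Fin (k + 1), 2 ^ (i : ℕ) * Y i e := by
  induction k generalizing X with
  | zero => exact ⟨fun _ => X, fun _ => hX, fun _ e => by simpa using hXk e, fun e => by simp⟩
  | succ k ih =>
    obtain ⟨Y₀, hY₀, hY₀1, hdvd⟩ := exists_unitary_circulation_two_dvd_sub hX
    choose X' hX' using hdvd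
    have hX'flow : netFlow src tgt ℤ X' = 0 := by
      have h2 : (2 : ℤ) • netFlow src tgt ℤ X' = 0 := by
        rw [← map_zsmul, show (2 : ℤ) • X' = X - Y₀ from funext fun e => by simp [hX' e],
          map_sub, hX, hY₀, sub_zero]
      exact (smul_eq_zero.mp h2).resolve_left two_ne_zero
    have hX'k : ∀ e, |X' e| ≤ 2 ^ k := by
      intro e
      have h1 := hXk e
      have h2 := hY₀1 e
      have h3 := hX' e
      rw [pow_succ, abs_le] at h1
      rw [abs_le] at h2 ⊢
      omega
    obtain ⟨Y', hY'flow, hY'1, hY'⟩ := ih hX'flow hX'k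
    refine ⟨Fin.cons Y₀ Y', Fin.cases hY₀ hY'flow, Fin.cases hY₀1 hY'1, fun e => ?_⟩
    simp only [Fin.sum_univ_succ, Fin.cons_zero, Fin.cons_succ, Fin.val_zero, Fin.val_succ,
      pow_zero, one_mul, pow_succ, mul_comm _ (2 : ℤ), mul_assoc, ← mul_sum, ← hY' e]
    linarith [hX' e]

end Expansion

theorem natAbs_le_circNorm {E : Type} [Fintype E] (X : E → ℤ) (e : E) :
    (X e).natAbs ≤ circNorm X :=
  le_sup (f := fun e => (X e).natAbs) (mem_univ e)

theorem stmt_1_general {V E : Type} [Fintype E] [DecidableEq V] (src tgt : E → V)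
    (X : E → ℤ) (hX : IsCircZ src tgt X) :
    ∃ Y : Fin (Nat.clog 2 (circNorm X) + 1) → E → ℤ,
      (∀ i, IsCircZ src tgt (Y i)) ∧ (∀ i e, |Y i e| ≤ 1) ∧
      (∀ e, X e = ∑ i : Fin (Nat.clog 2 (circNorm X) + 1), 2 ^ (i : ℕ) * Y i e) := by
  simp only [isCircZ_iff_netFlow_eq_zero] at hX ⊢
  refine exists_binary_expansion _ hX fun e => ?_
  rw [Int.abs_eq_natAbs]
  exact_mod_cast (natAbs_le_circNorm X e).trans (Nat.le_pow_clog one_lt_two _)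

/-- Any nonzero integer circulation `X` can be written as `∑_{i=0}^{k} 2^i • Y_i`
with `k = ⌈log₂ ‖X‖⌉` and each `Y_i` a unitary circulation. -/
theorem stmt_1 {V E : Type} [Fintype E] [DecidableEq V] (src tgt : E → V)
    (X : E → ℤ) (hX : IsCircZ src tgt X) (hX0 : X ≠ 0) :
    ∃ Y : Fin (Nat.clog 2 (circNorm X) + 1) → E → ℤ,
      (∀ i, IsCircZ src tgt (Y i)) ∧ (∀ i e, |Y i e| ≤ 1) ∧
      (∀ e, X e = ∑ i : Fin (Nat.clog 2 (circNorm X) + 1), 2 ^ (i : ℕ) * Y i e) :=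
  stmt_1_general src tgt X hX
end

section
/- Let G = (V, E, c) be a finite directed graph with edge costs c : E → ℝ≥0, and suppose there exists a circulation C : E → ℕ with C(e) ≥ 1 for all e; let mccc(G) be the minimum of Σ_e c(e)·C(e) over all such covering circulations. Then for any circulation X : E → ℤ with |X(e)| ≤ 1 for all e, there exist circulations A, B : E → ℤ with A, B ≥ 0 (componentwise), X = A − B, and cost(A) + cost(B) ≤ mccc(G). -/
open Finset

/-- Cost of a circulation with respect to an edge-cost function. -/
def circCost {E : Type} [Fintype E] (c : E → ℝ) (Z : E → ℤ) : ℝ :=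
  ∑ e, c e * (Z e : ℝ)

/-- Minimum cost of a circulation covering every edge (value at least `1` everywhere). -/
noncomputable def mccc {V E : Type} [Fintype E] [DecidableEq V]
    (src tgt : E → V) (c : E → ℝ) : ℝ :=
  sInf {r : ℝ | ∃ C : E → ℤ, IsCircZ src tgt C ∧ (∀ e, 1 ≤ C e) ∧ r = circCost c C}

section Aux

variable {V E : Type} [Fintype E] [DecidableEq V] (src tgt : E → V)

/-- boundary (excess) of a flow at a vertex -/
def bdry (g : E → ℤ) (v : V) : ℤ :=
  (∑ e, if tgt e = v then g e else 0) - (∑ e, if src e = v then g e else 0)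

lemma isCircZ_iff (g : E → ℤ) : IsCircZ src tgt g ↔ ∀ v, bdry src tgt g v = 0 := by
  unfold IsCircZ bdry
  constructor
  · intro h v; rw [h v]; ring
  · intro h v; have := h v; linarith

lemma bdry_add (f g : E → ℤ) (v : V) :
    bdry src tgt (fun e => f e + g e) v = bdry src tgt f v + bdry src tgt g v := by
  unfold bdry
  have h1 : ∀ (w : E → V), (∑ e, if w e = v then f e + g e else 0) =
      (∑ e, if w e = v then f e else 0) + (∑ e, if w e = v then g e else 0) := by
    intro w
    rw [← Finset.sum_add_distrib]
    apply Finset.sum_congr rfl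
    intro e _; split <;> simp
  rw [h1, h1]; ring

lemma bdry_sub (f g : E → ℤ) (v : V) :
    bdry src tgt (fun e => f e - g e) v = bdry src tgt f v - bdry src tgt g v := by
  unfold bdry
  have h1 : ∀ (w : E → V), (∑ e, if w e = v then f e - g e else 0) =
      (∑ e, if w e = v then f e else 0) - (∑ e, if w e = v then g e else 0) := by
    intro w
    rw [← Finset.sum_sub_distrib]
    apply Finset.sum_congr rfl
    intro e _; split <;> simp
  rw [h1, h1]; ring

lemma bdry_single [DecidableEq E] (e1 : E) (a : ℤ) (v : V) :
    bdry src tgt (fun e => if e = e1 then a else 0) v =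
      (if tgt e1 = v then a else 0) - (if src e1 = v then a else 0) := by
  unfold bdry
  have h1 : ∀ (w : E → V), (∑ e, if w e = v then (if e = e1 then a else 0) else 0) =
      (if w e1 = v then a else 0) := by
    intro w
    rw [Finset.sum_eq_single e1]
    · simp
    · intro b _ hb; simp [hb]
    · simp
  rw [h1, h1]

lemma odd_iff_zmod (n : ℤ) : Odd n ↔ (n : ZMod 2) = 1 := by
  rw [← Int.not_even_iff_odd, even_iff_two_dvd,
    show ((2:ℤ) ∣ n) ↔ (((2:ℕ)):ℤ) ∣ n by norm_num, ← ZMod.intCast_zmod_eq_zero_iff_dvd]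
  generalize (n : ZMod 2) = x
  revert x; decide

lemma even_iff_zmod (n : ℤ) : Even n ↔ (n : ZMod 2) = 0 := by
  rw [even_iff_two_dvd,
    show ((2:ℤ) ∣ n) ↔ (((2:ℕ)):ℤ) ∣ n by norm_num, ← ZMod.intCast_zmod_eq_zero_iff_dvd]

/-- Extension lemma: at a vertex with odd boundary there is an unused odd edge. -/
lemma ext_lemma (D : E → ℤ) (hD : IsCircZ src tgt D) (g : E → ℤ)
    (hg1 : ∀ e, |g e| ≤ 1) (hg2 : ∀ e, g e ≠ 0 → Odd (D e)) (h : V)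
    (hodd : Odd (bdry src tgt g h)) :
    ∃ e, Odd (D e) ∧ g e = 0 ∧ (src e = h ∨ tgt e = h) := by
  by_contra hcon
  push_neg at hcon
  have key : ∀ e : E,
      (((if tgt e = h then g e else 0 : ℤ) : ZMod 2) + ((if src e = h then g e else 0 : ℤ) : ZMod 2)) =
      (((if tgt e = h then D e else 0 : ℤ) : ZMod 2) + ((if src e = h then D e else 0 : ℤ) : ZMod 2)) := by
    intro e
    by_cases hinc : src e = h ∨ tgt e = h
    · by_cases hDe : Odd (D e)
      · have hge : g e ≠ 0 := by
          intro h0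
          exact absurd hinc (by simpa using hcon e hDe h0)
        have : (g e : ZMod 2) = (D e : ZMod 2) := by
          have h1 : |g e| = 1 := le_antisymm (hg1 e) (Int.one_le_abs hge)
          have : g e = 1 ∨ g e = -1 := by
            rcases abs_eq (by norm_num : (0:ℤ) ≤ 1) |>.mp h1 with h | h
            · left; exact h
            · right; exact h
          have hgodd : Odd (g e) := by rcases this with h | h <;> simp [h]
          rw [(odd_iff_zmod _).mp hgodd, (odd_iff_zmod _).mp hDe]
        split_ifs <;> simp_all
      · have hge : g e = 0 := by
          by_contra h0; exact hDe (hg2 e h0)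
        have hD0 : (D e : ZMod 2) = 0 := by
          rw [← even_iff_zmod]; exact Int.not_odd_iff_even.mp hDe
        split_ifs <;> simp_all
    · push_neg at hinc
      simp [hinc.1, hinc.2]
  have cast_bdry : ∀ (f : E → ℤ), ((bdry src tgt f h : ℤ) : ZMod 2) =
      ∑ e, (((if tgt e = h then f e else 0 : ℤ) : ZMod 2) + ((if src e = h then f e else 0 : ℤ) : ZMod 2)) := by
    intro f
    unfold bdry
    push_cast
    rw [Finset.sum_add_distrib]
    ring_nf
    rw [CharTwo.sub_eq_add]
  have h1 : ((bdry src tgt g h : ℤ) : ZMod 2) = ((bdry src tgt D h : ℤ) : ZMod 2) := by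
    rw [cast_bdry, cast_bdry]
    exact Finset.sum_congr rfl fun e _ => key e
  rw [(isCircZ_iff src tgt D).mp hD h] at h1
  rw [(odd_iff_zmod _).mp hodd] at h1
  simp at h1


open Classical in
lemma close_lemma [DecidableEq E] (D : E → ℤ) (hD : IsCircZ src tgt D) :
    ∀ n : ℕ, ∀ g : E → ℤ, ∀ s h : V,
      ((univ.filter fun e => Odd (D e) ∧ g e = 0).card ≤ n) →
      (∀ e, |g e| ≤ 1) → (∀ e, g e ≠ 0 → Odd (D e)) → s ≠ h →
      (∀ v, bdry src tgt g v = if v = h then 1 else if v = s then -1 else 0) →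
      ∃ z : E → ℤ, IsCircZ src tgt z ∧ (∀ e, |z e| ≤ 1) ∧ (∀ e, z e ≠ 0 → Odd (D e)) ∧
        ∃ e, z e ≠ 0 := by
  intro n
  induction n with
  | zero =>
    intro g s h hcard hg1 hg2 hsh hb
    obtain ⟨e1, he1, hge1, hinc⟩ := ext_lemma src tgt D hD g hg1 hg2 h
      (by rw [hb h]; simp)
    have : e1 ∈ univ.filter fun e => Odd (D e) ∧ g e = 0 := by
      simp [he1, hge1]
    have := Finset.card_pos.mpr ⟨e1, this⟩
    omega
  | succ n ih =>
    intro g s h hcard hg1 hg2 hsh hb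
    obtain ⟨e1, he1, hge1, hinc⟩ := ext_lemma src tgt D hD g hg1 hg2 h
      (by rw [hb h]; simp)
    by_cases hloop : src e1 = tgt e1
    · refine ⟨(fun e => if e = e1 then 1 else 0), ?_, ?_, ?_, ⟨e1, by simp⟩⟩
      · rw [isCircZ_iff]; intro v; rw [bdry_single, hloop]; ring
      · intro e; by_cases h' : e = e1 <;> simp [h']
      · intro e he
        by_cases h' : e = e1
        · rw [h']; exact he1
        · simp [h'] at he
    · have hmem : e1 ∈ univ.filter fun e => Odd (D e) ∧ g e = 0 := by
        simp [he1, hge1]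
      rcases hinc with hsrc | htgt
      · -- src e1 = h : push +1 out of h along e1, new head is tgt e1
        set g' : E → ℤ := fun e => g e + (if e = e1 then 1 else 0) with hg'
        have hbd' : ∀ v, bdry src tgt g' v =
            (if v = h then 1 else if v = s then -1 else 0)
            + ((if tgt e1 = v then 1 else 0) - (if src e1 = v then 1 else 0)) := by
          intro v
          rw [hg', bdry_add, bdry_single, hb v]
        have hg'1 : ∀ e, |g' e| ≤ 1 := by
          intro e
          by_cases h' : e = e1
          · subst h'; simp [hg', hge1]
          · simpa [hg', h'] using hg1 e
        have hg'2 : ∀ e, g' e ≠ 0 → Odd (D e) := by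
          intro e he
          by_cases h' : e = e1
          · subst h'; exact he1
          · exact hg2 e (by simpa [hg', h'] using he)
        have hcard' : (univ.filter fun e => Odd (D e) ∧ g' e = 0).card ≤ n := by
          have hsub : (univ.filter fun e => Odd (D e) ∧ g' e = 0) ⊆
              (univ.filter fun e => Odd (D e) ∧ g e = 0).erase e1 := by
            intro e he
            simp only [mem_filter, mem_univ, true_and] at he
            have hne : e ≠ e1 := by
              intro h'; subst h'; simp [hg', hge1] at he
            rw [Finset.mem_erase]
            refine ⟨hne, ?_⟩
            simp only [mem_filter, mem_univ, true_and]
            exact ⟨he.1, by simpa [hg', hne] using he.2⟩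
          have := Finset.card_le_card hsub
          rw [Finset.card_erase_of_mem hmem] at this
          have := Finset.card_pos.mpr ⟨e1, hmem⟩
          omega
        by_cases hclose : tgt e1 = s
        · refine ⟨g', ?_, hg'1, hg'2, ⟨e1, by simp [hg', hge1]⟩⟩
          rw [isCircZ_iff]
          intro v
          rw [hbd' v, hsrc, hclose]
          clear hbd' hb ih hcard hcard' hg1 hg2 hg'1 hg'2 hD hmem he1
          split_ifs <;> subst_vars <;>
            first
              | omega
              | exact absurd rfl hloop
              | exact absurd ‹src e1 = tgt e1› hloop
              | exact absurd rfl ‹¬tgt e1 = tgt e1›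
              | exact absurd rfl ‹¬src e1 = src e1›
              | exact absurd ‹tgt e1 = src e1›.symm hloop
        · refine ih g' s (tgt e1) hcard' hg'1 hg'2 (fun h' => hclose h'.symm) ?_
          intro v
          rw [hbd' v, hsrc]
          have h1 : tgt e1 ≠ h := fun h' => hloop (hsrc.trans h'.symm)
          clear hbd' hb ih hcard hcard' hg1 hg2 hg'1 hg'2 hD hmem he1
          split_ifs <;> subst_vars <;>
            first
              | omega
              | exact absurd rfl hloop
              | exact absurd ‹src e1 = tgt e1› hloop
              | exact absurd rfl ‹¬tgt e1 = tgt e1›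
              | exact absurd rfl ‹¬src e1 = src e1›
              | exact absurd ‹tgt e1 = src e1›.symm hloop
      · -- tgt e1 = h : push -1 along e1, new head is src e1
        set g' : E → ℤ := fun e => g e + (if e = e1 then -1 else 0) with hg'
        have hbd' : ∀ v, bdry src tgt g' v =
            (if v = h then 1 else if v = s then -1 else 0)
            + ((if tgt e1 = v then -1 else 0) - (if src e1 = v then -1 else 0)) := by
          intro v
          rw [hg', bdry_add, bdry_single, hb v]
        have hg'1 : ∀ e, |g' e| ≤ 1 := by
          intro e
          by_cases h' : e = e1
          · subst h'; simp [hg', hge1]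
          · simpa [hg', h'] using hg1 e
        have hg'2 : ∀ e, g' e ≠ 0 → Odd (D e) := by
          intro e he
          by_cases h' : e = e1
          · subst h'; exact he1
          · exact hg2 e (by simpa [hg', h'] using he)
        have hcard' : (univ.filter fun e => Odd (D e) ∧ g' e = 0).card ≤ n := by
          have hsub : (univ.filter fun e => Odd (D e) ∧ g' e = 0) ⊆
              (univ.filter fun e => Odd (D e) ∧ g e = 0).erase e1 := by
            intro e he
            simp only [mem_filter, mem_univ, true_and] at he
            have hne : e ≠ e1 := by
              intro h'; subst h'; simp [hg', hge1] at he
            rw [Finset.mem_erase]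
            refine ⟨hne, ?_⟩
            simp only [mem_filter, mem_univ, true_and]
            exact ⟨he.1, by simpa [hg', hne] using he.2⟩
          have := Finset.card_le_card hsub
          rw [Finset.card_erase_of_mem hmem] at this
          have := Finset.card_pos.mpr ⟨e1, hmem⟩
          omega
        by_cases hclose : src e1 = s
        · refine ⟨g', ?_, hg'1, hg'2, ⟨e1, by simp [hg', hge1]⟩⟩
          rw [isCircZ_iff]
          intro v
          rw [hbd' v, htgt, hclose]
          clear hbd' hb ih hcard hcard' hg1 hg2 hg'1 hg'2 hD hmem he1
          split_ifs <;> subst_vars <;>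
            first
              | omega
              | exact absurd rfl hloop
              | exact absurd ‹src e1 = tgt e1› hloop
              | exact absurd rfl ‹¬tgt e1 = tgt e1›
              | exact absurd rfl ‹¬src e1 = src e1›
              | exact absurd ‹tgt e1 = src e1›.symm hloop
        · refine ih g' s (src e1) hcard' hg'1 hg'2 (fun h' => hclose h'.symm) ?_
          intro v
          rw [hbd' v, htgt]
          have h1 : src e1 ≠ h := fun h' => hloop (h'.trans htgt.symm)
          clear hbd' hb ih hcard hcard' hg1 hg2 hg'1 hg'2 hD hmem he1
          split_ifs <;> subst_vars <;>
            first
              | omega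
              | exact absurd rfl hloop
              | exact absurd ‹src e1 = tgt e1› hloop
              | exact absurd rfl ‹¬tgt e1 = tgt e1›
              | exact absurd rfl ‹¬src e1 = src e1›
              | exact absurd ‹tgt e1 = src e1›.symm hloop
      

open Classical in
lemma par_lemma [DecidableEq E] :
    ∀ n : ℕ, ∀ D : E → ℤ, IsCircZ src tgt D →
      ((univ.filter fun e => Odd (D e)).card ≤ n) →
      ∃ w : E → ℤ, IsCircZ src tgt w ∧ (∀ e, |w e| ≤ 1) ∧ (∀ e, Odd (D e) ↔ w e ≠ 0) := by
  intro n
  induction n with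
  | zero =>
    intro D hD hcard
    refine ⟨fun _ => 0, by intro v; simp, by intro e; simp, ?_⟩
    intro e
    simp only [ne_eq, not_true_eq_false, iff_false]
    intro hodd
    have : e ∈ univ.filter fun e => Odd (D e) := by simp [hodd]
    have := Finset.card_pos.mpr ⟨e, this⟩
    omega
  | succ n ih =>
    intro D hD hcard
    by_cases hall : ∀ e, ¬ Odd (D e)
    · refine ⟨fun _ => 0, by intro v; simp, by intro e; simp, ?_⟩
      intro e
      simp only [ne_eq, not_true_eq_false, iff_false]
      exact hall e
    · push_neg at hall
      obtain ⟨e0, he0⟩ := hall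
      have hz : ∃ z : E → ℤ, IsCircZ src tgt z ∧ (∀ e, |z e| ≤ 1) ∧
          (∀ e, z e ≠ 0 → Odd (D e)) ∧ ∃ e, z e ≠ 0 := by
        by_cases hloop : src e0 = tgt e0
        · refine ⟨fun e => if e = e0 then 1 else 0, ?_, ?_, ?_, ⟨e0, by simp⟩⟩
          · rw [isCircZ_iff]; intro v; rw [bdry_single, hloop]; ring
          · intro e; by_cases h' : e = e0 <;> simp [h']
          · intro e he
            by_cases h' : e = e0
            · rw [h']; exact he0
            · simp [h'] at he
        · refine close_lemma src tgt D hD (Fintype.card E)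
            (fun e => if e = e0 then 1 else 0) (src e0) (tgt e0) ?_ ?_ ?_ ?_ ?_
          · exact le_trans (Finset.card_le_card (Finset.subset_univ _)) (le_of_eq rfl)
          · intro e; by_cases h' : e = e0 <;> simp [h']
          · intro e he
            by_cases h' : e = e0
            · rw [h']; exact he0
            · simp [h'] at he
          · exact hloop
          · intro v
            rw [bdry_single]
            split_ifs <;> subst_vars <;>
              first
                | omega
                | exact absurd rfl hloop
                | exact absurd ‹src e0 = tgt e0› hloop
                | exact absurd ‹tgt e0 = src e0›.symm hloop
                | exact absurd rfl ‹¬tgt e0 = tgt e0›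
                | exact absurd rfl ‹¬src e0 = src e0›
      obtain ⟨z, hz1, hz2, hz3, estar, hze⟩ := hz
      set D' : E → ℤ := fun e => D e - z e with hD'def
      have hD' : IsCircZ src tgt D' := by
        rw [isCircZ_iff]
        intro v
        rw [hD'def, bdry_sub, (isCircZ_iff src tgt D).mp hD v,
          (isCircZ_iff src tgt z).mp hz1 v]
        ring
      have hzodd : ∀ e, z e ≠ 0 → ¬ Odd (D' e) := by
        intro e he
        have h1 : Odd (D e) := hz3 e he
        have h2 : z e = 1 ∨ z e = -1 := by
          rcases (abs_eq (by norm_num : (0:ℤ) ≤ 1)).mp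
            (le_antisymm (hz2 e) (Int.one_le_abs he)) with h | h
          · exact Or.inl h
          · exact Or.inr h
        rw [Int.odd_iff] at h1 ⊢
        simp only [hD'def]
        omega
      have hcard' : (univ.filter fun e => Odd (D' e)).card ≤ n := by
        have hsub : (univ.filter fun e => Odd (D' e)) ⊆
            (univ.filter fun e => Odd (D e)).erase estar := by
          intro e he
          simp only [mem_filter, mem_univ, true_and] at he
          have hz0 : z e = 0 := by
            by_contra h0
            exact hzodd e h0 he
          rw [Finset.mem_erase]
          constructor
          · intro h'; subst h'; exact hze hz0
          · simp only [mem_filter, mem_univ, true_and]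
            have : D' e = D e := by simp [hD'def, hz0]
            rwa [this] at he
        have hmem : estar ∈ univ.filter fun e => Odd (D e) := by
          simp [hz3 estar hze]
        have := Finset.card_le_card hsub
        rw [Finset.card_erase_of_mem hmem] at this
        have := Finset.card_pos.mpr ⟨estar, hmem⟩
        omega
      obtain ⟨w', hw1, hw2, hw3⟩ := ih D' hD' hcard'
      refine ⟨fun e => w' e + z e, ?_, ?_, ?_⟩
      · rw [isCircZ_iff]
        intro v
        rw [bdry_add, (isCircZ_iff src tgt w').mp hw1 v, (isCircZ_iff src tgt z).mp hz1 v]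
        ring
      · intro e
        by_cases h0 : z e = 0
        · simpa [h0] using hw2 e
        · have : w' e = 0 := by
            by_contra h'
            exact hzodd e h0 ((hw3 e).mpr h')
          simpa [this] using hz2 e
      · intro e
        by_cases h0 : z e = 0
        · have hDD : D' e = D e := by simp [hD'def, h0]
          rw [← hDD, hw3 e]
          simp [h0]
        · have hw'0 : w' e = 0 := by
            by_contra h'
            exact hzodd e h0 ((hw3 e).mpr h')
          simp only [hw'0, zero_add, ne_eq, h0, not_false_eq_true, iff_true]
          exact hz3 e h0

end Aux

open Classical in
lemma mccc_attained {V E : Type} [Fintype E] [DecidableEq V] (src tgt : E → V)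
    (c : E → ℝ) (hc : ∀ e, 0 ≤ c e)
    (hcov : ∃ C : E → ℤ, IsCircZ src tgt C ∧ ∀ e, 1 ≤ C e) :
    ∃ C : E → ℤ, IsCircZ src tgt C ∧ (∀ e, 1 ≤ C e) ∧ circCost c C = mccc src tgt c := by
  classical
  set S := {r : ℝ | ∃ C : E → ℤ, IsCircZ src tgt C ∧ (∀ e, 1 ≤ C e) ∧ r = circCost c C} with hS
  have hmccc : mccc src tgt c = sInf S := rfl
  obtain ⟨C₀, hC₀1, hC₀2⟩ := hcov
  set m := circCost c C₀ with hm
  have hmS : m ∈ S := ⟨C₀, hC₀1, hC₀2, rfl⟩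
  have hcast1 : ∀ (C : E → ℤ), (∀ e, 1 ≤ C e) → ∀ e, (0:ℝ) ≤ c e * (C e : ℝ) := by
    intro C hC e
    have h1 : (1:ℝ) ≤ (C e : ℝ) := by exact_mod_cast hC e
    exact mul_nonneg (hc e) (by linarith)
  have hbdd : BddBelow S := by
    refine ⟨0, fun r hr => ?_⟩
    obtain ⟨C, _, hC2, rfl⟩ := hr
    exact Finset.sum_nonneg fun e _ => hcast1 C hC2 e
  set M : ℤ := 1 + ∑ e, max 0 ⌈m / c e⌉ with hM
  have hsumnn : (0:ℤ) ≤ ∑ e, max 0 ⌈m / c e⌉ :=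
    Finset.sum_nonneg fun e _ => le_max_left 0 _
  have hM1 : (1:ℤ) ≤ M := by omega
  have hMe : ∀ e, 0 < c e → m / c e ≤ (M:ℝ) := by
    intro e he
    have h1 : ⌈m / c e⌉ ≤ M := by
      have h2 : max 0 ⌈m / c e⌉ ≤ ∑ e', max 0 ⌈m / c e'⌉ :=
        Finset.single_le_sum (f := fun e' => max (0:ℤ) ⌈m / c e'⌉)
          (fun e' _ => le_max_left _ _) (Finset.mem_univ e)
      have h3 : ⌈m / c e⌉ ≤ max 0 ⌈m / c e⌉ := le_max_right _ _
      omega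
    calc m / c e ≤ (⌈m / c e⌉ : ℝ) := Int.le_ceil _
      _ ≤ (M:ℝ) := by exact_mod_cast h1
  set K : Finset ℝ := (Fintype.piFinset fun _ : E => Finset.Icc (1:ℤ) M).image (circCost c)
    with hK
  have hTsub : S ∩ Set.Iic m ⊆ ↑K := by
    rintro r ⟨⟨C, hC1, hC2, rfl⟩, hrm⟩
    set C' : E → ℤ := fun e => if 0 < c e then C e else 1 with hC'
    have hcost : circCost c C' = circCost c C := by
      unfold circCost
      refine Finset.sum_congr rfl fun e _ => ?_
      by_cases he : 0 < c e
      · simp [hC', he]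
      · have hce : c e = 0 := le_antisymm (not_lt.mp he) (hc e)
        simp [hce]
    have hmem : C' ∈ Fintype.piFinset fun _ : E => Finset.Icc (1:ℤ) M := by
      rw [Fintype.mem_piFinset]
      intro e
      rw [Finset.mem_Icc]
      by_cases he : 0 < c e
      · refine ⟨by simpa [hC', he] using hC2 e, ?_⟩
        have hterm : c e * (C e : ℝ) ≤ circCost c C :=
          Finset.single_le_sum (fun e' _ => hcast1 C hC2 e') (Finset.mem_univ e)
        have h4 : (C e : ℝ) ≤ m / c e := by
          rw [le_div_iff₀ he]
          calc (C e : ℝ) * c e = c e * (C e : ℝ) := by ring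
            _ ≤ circCost c C := hterm
            _ ≤ m := hrm
        have h5 : (C e : ℝ) ≤ (M : ℝ) := le_trans h4 (hMe e he)
        simp only [hC', if_pos he]
        exact_mod_cast h5
      · simp [hC', he, hM1]
    rw [hK]
    simp only [Finset.coe_image, Set.mem_image, Finset.mem_coe]
    exact ⟨C', hmem, hcost⟩
  have hTfin : (S ∩ Set.Iic m).Finite := Set.Finite.subset K.finite_toSet hTsub
  have hTne : (S ∩ Set.Iic m).Nonempty := ⟨m, hmS, le_refl m⟩
  have ht : sInf (S ∩ Set.Iic m) ∈ S ∩ Set.Iic m := Set.Nonempty.csInf_mem hTne hTfin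
  have heq : mccc src tgt c = sInf (S ∩ Set.Iic m) := by
    rw [hmccc]
    apply le_antisymm
    · exact csInf_le hbdd ht.1
    · refine le_csInf ⟨m, hmS⟩ fun x hx => ?_
      by_cases hxm : x ≤ m
      · exact csInf_le hTfin.bddBelow ⟨hx, hxm⟩
      · have h6 : sInf (S ∩ Set.Iic m) ≤ m := csInf_le hTfin.bddBelow ⟨hmS, le_refl m⟩
        linarith
  obtain ⟨C, h1, h2, h3⟩ := ht.1
  exact ⟨C, h1, h2, by rw [← h3, heq]⟩


/-- Any unitary circulation `X` can be written as `A - B` with `A, B` nonnegative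
circulations of total cost at most the minimum cost of a circulation cover. -/
theorem stmt_2 {V E : Type} [Fintype E] [DecidableEq V] (src tgt : E → V)
    (c : E → ℝ) (hc : ∀ e, 0 ≤ c e)
    (hcov : ∃ C : E → ℤ, IsCircZ src tgt C ∧ ∀ e, 1 ≤ C e)
    (X : E → ℤ) (hX : IsCircZ src tgt X) (hXu : ∀ e, |X e| ≤ 1) :
    ∃ A B : E → ℤ, IsCircZ src tgt A ∧ IsCircZ src tgt B ∧
      (∀ e, 0 ≤ A e) ∧ (∀ e, 0 ≤ B e) ∧ (∀ e, X e = A e - B e) ∧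
      circCost c A + circCost c B ≤ mccc src tgt c := by
  classical
  obtain ⟨C, hC1, hC2, hCcost⟩ := mccc_attained src tgt c hc hcov
  set D : E → ℤ := fun e => C e - X e with hDdef
  have hD : IsCircZ src tgt D := by
    rw [isCircZ_iff]
    intro v
    rw [hDdef, bdry_sub, (isCircZ_iff src tgt C).mp ((isCircZ_iff src tgt C).mpr
      (fun v => by rw [show bdry src tgt C v = _ - _ from rfl, hC1 v]; ring)) v]
    rw [(isCircZ_iff src tgt X).mp ((isCircZ_iff src tgt X).mpr
      (fun v => by rw [show bdry src tgt X v = _ - _ from rfl, hX v]; ring)) v]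
    ring
  have hXb : ∀ e, -1 ≤ X e ∧ X e ≤ 1 := fun e => abs_le.mp (hXu e)
  have hDpos : ∀ e, 0 ≤ D e := by
    intro e
    have h1 := hC2 e
    have h2 := (hXb e).2
    simp only [hDdef]
    omega
  obtain ⟨w, hw1, hw2, hw3⟩ := par_lemma src tgt (Fintype.card E) D hD
    (le_trans (Finset.card_le_card (Finset.subset_univ _)) (le_of_eq (Finset.card_univ)))
  -- per-edge parity facts
  have hfact : ∀ e, (w e = 0 ∧ D e % 2 = 0) ∨ ((w e = 1 ∨ w e = -1) ∧ D e % 2 = 1) := by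
    intro e
    by_cases h0 : w e = 0
    · left
      refine ⟨h0, ?_⟩
      have : ¬ Odd (D e) := fun h => (hw3 e).mp h h0
      rw [Int.not_odd_iff_even, Int.even_iff] at this
      exact this
    · right
      have hodd : Odd (D e) := by
        by_contra h
        exact h0 (by
          by_contra h'
          exact h ((hw3 e).mpr h'))
      constructor
      · rcases (abs_eq (by norm_num : (0:ℤ) ≤ 1)).mp
          (le_antisymm (hw2 e) (Int.one_le_abs h0)) with h | h
        · exact Or.inl h
        · exact Or.inr h
      · rwa [Int.odd_iff] at hodd
  have hdvd1 : ∀ e, (2:ℤ) ∣ (D e - w e) := by intro e; rcases hfact e with ⟨h1, h2⟩ | ⟨h1, h2⟩ <;> omega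
  have hdvd2 : ∀ e, (2:ℤ) ∣ (D e + w e) := by intro e; rcases hfact e with ⟨h1, h2⟩ | ⟨h1, h2⟩ <;> omega
  set B₁ : E → ℤ := fun e => (D e - w e) / 2 with hB₁def
  set B₂ : E → ℤ := fun e => (D e + w e) / 2 with hB₂def
  have hB₁ : ∀ e, 2 * B₁ e = D e - w e := fun e => Int.mul_ediv_cancel' (hdvd1 e)
  have hB₂ : ∀ e, 2 * B₂ e = D e + w e := fun e => Int.mul_ediv_cancel' (hdvd2 e)
  -- circulations from doubled circulations
  have circ_of_double : ∀ (B g : E → ℤ), (∀ e, 2 * B e = g e) → IsCircZ src tgt g →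
      IsCircZ src tgt B := by
    intro B g hBg hg v
    have hh : ∀ (wv : E → V), ∑ e, (2:ℤ) * (if wv e = v then B e else 0) =
        ∑ e, if wv e = v then g e else 0 := by
      intro wv
      refine Finset.sum_congr rfl fun e _ => ?_
      split
      · exact hBg e
      · ring
    have h2 : 2 * (∑ e, if tgt e = v then B e else 0) = 2 * ∑ e, if src e = v then B e else 0 := by
      rw [Finset.mul_sum, Finset.mul_sum, hh, hh, hg v]
    exact mul_left_cancel₀ two_ne_zero h2
  have hDw1 : IsCircZ src tgt (fun e => D e - w e) := by
    rw [isCircZ_iff]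
    intro v
    rw [bdry_sub, (isCircZ_iff src tgt D).mp hD v, (isCircZ_iff src tgt w).mp hw1 v]
    ring
  have hDw2 : IsCircZ src tgt (fun e => D e + w e) := by
    rw [isCircZ_iff]
    intro v
    rw [bdry_add, (isCircZ_iff src tgt D).mp hD v, (isCircZ_iff src tgt w).mp hw1 v]
    ring
  have hB₁circ : IsCircZ src tgt B₁ := circ_of_double B₁ _ hB₁ hDw1
  have hB₂circ : IsCircZ src tgt B₂ := circ_of_double B₂ _ hB₂ hDw2
  -- nonnegativity and coverage of negative edges
  have hBpos : ∀ e, 0 ≤ B₁ e ∧ 0 ≤ B₂ e ∧ (X e = -1 → 1 ≤ B₁ e ∧ 1 ≤ B₂ e) := by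
    intro e
    have h1 := hB₁ e
    have h2 := hB₂ e
    have h3 := hDpos e
    have h4 := hC2 e
    have h5 : D e = C e - X e := rfl
    rcases hfact e with ⟨ha, hb⟩ | ⟨ha, hb⟩ <;> [skip; rcases ha with ha | ha] <;>
      refine ⟨by omega, by omega, fun hx => by omega⟩
  -- cost identities
  have hsum : ∀ e, B₁ e + B₂ e = D e := by
    intro e
    have h1 := hB₁ e
    have h2 := hB₂ e
    omega
  have hcostsum : circCost c B₁ + circCost c B₂ = circCost c D := by
    unfold circCost
    rw [← Finset.sum_add_distrib]
    refine Finset.sum_congr rfl fun e _ => ?_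
    rw [← mul_add, ← Int.cast_add, hsum e]
  -- choose cheaper half
  have hkey : ∀ B : E → ℤ, IsCircZ src tgt B → (∀ e, 0 ≤ B e) → (∀ e, X e = -1 → 1 ≤ B e) →
      2 * circCost c B ≤ circCost c D →
      ∃ A B' : E → ℤ, IsCircZ src tgt A ∧ IsCircZ src tgt B' ∧
        (∀ e, 0 ≤ A e) ∧ (∀ e, 0 ≤ B' e) ∧ (∀ e, X e = A e - B' e) ∧
        circCost c A + circCost c B' ≤ mccc src tgt c := by
    intro B hBc hBpos' hBneg hBcost
    set A : E → ℤ := fun e => X e + B e with hAdef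
    have hAc : IsCircZ src tgt A := by
      rw [isCircZ_iff]
      intro v
      rw [hAdef, bdry_add, (isCircZ_iff src tgt X).mp hX v, (isCircZ_iff src tgt B).mp hBc v]
      ring
    have hApos : ∀ e, 0 ≤ A e := by
      intro e
      have h1 := (hXb e).1
      have h2 := (hXb e).2
      have h3 := hBpos' e
      by_cases hx : X e = -1
      · have := hBneg e hx
        simp only [hAdef]
        omega
      · simp only [hAdef]
        omega
    have hcostA : circCost c A = circCost c X + circCost c B := by
      unfold circCost
      rw [← Finset.sum_add_distrib]
      refine Finset.sum_congr rfl fun e _ => ?_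
      rw [← mul_add, ← Int.cast_add]
    have hcostXD : circCost c X + circCost c D = circCost c C := by
      unfold circCost
      rw [← Finset.sum_add_distrib]
      refine Finset.sum_congr rfl fun e _ => ?_
      rw [← mul_add, ← Int.cast_add]
      congr 2
      simp only [hDdef]
      ring
    refine ⟨A, B, hAc, hBc, hApos, hBpos', fun e => by simp only [hAdef]; ring, ?_⟩
    have : circCost c A + circCost c B = circCost c X + 2 * circCost c B := by
      rw [hcostA]; ring
    rw [this, ← hCcost, ← hcostXD]
    linarith
  by_cases hch : circCost c B₁ ≤ circCost c B₂
  · exact hkey B₁ hB₁circ (fun e => (hBpos e).1) (fun e hx => ((hBpos e).2.2 hx).1)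
      (by linarith)
  · exact hkey B₂ hB₂circ (fun e => (hBpos e).2.1) (fun e hx => ((hBpos e).2.2 hx).2)
      (by linarith)
end

section
/- Let G = (V, E, c) be a finite directed graph with nonnegative edge costs admitting a covering circulation, and let X : E → ℤ be a circulation with k = ⌈log₂ ‖X‖⌉ (and X nonzero). Then there exist nonnegative integer circulations A_0, B_0, ..., A_k, B_k such that X = Σ_{i=0}^{k} 2^i (A_i − B_i) and cost(A_0 + ... + A_k + B_0 + ... + B_k) ≤ (k+1) · mccc(G). -/
open Finset

/-!
Peel off binary digits. Every circulation `Z` is congruent mod 2 to a circulation `σ` with values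
in `{-1, 0, 1}`: subtract twice a conforming cycle through an edge where `|Z| ≥ 2` until none is
left. Then `(Z - σ) / 2` is a circulation of half the norm. Each digit `σ` is split as `A - B` with
`A = (C + σ - ρ) / 2` and `B = (C - σ - ρ) / 2`, where `C ≥ 1` is a minimum-cost covering
circulation and `ρ` is a `{-1, 0, 1}`-circulation congruent to `C - σ`, with its sign chosen so
that `cost ρ ≥ 0`; thus `A, B ≥ 0` and `cost (A + B) = cost C - cost ρ ≤ mccc`.

Reversing the edges that carry negative flow makes a circulation nonnegative, and conforming
cycles become cycles in its support. These exist because every support edge can be followed by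
a support edge leaving its head; the periodic points of such a successor map form a union of
cycles.
-/

open Function

theorem Function.exists_iterate_mem_periodicPts {α : Type*} [Finite α] (f : α → α) (x : α) :
    ∃ n, f^[n] x ∈ periodicPts f := by
  obtain ⟨m, n, heq, hne⟩ : ∃ m n, f^[m] x = f^[n] x ∧ m ≠ n := by
    simpa [Injective] using not_injective_infinite_finite (f^[·] x)
  wlog hmn : m < n generalizing m n
  · exact this n m heq.symm hne.symm (by omega)
  refine ⟨m, mk_mem_periodicPts (Nat.sub_pos_of_lt hmn) ?_⟩
  rw [IsPeriodicPt, IsFixedPt, ← iterate_add_apply, Nat.sub_add_cancel hmn.le, heq]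

section Circulation

variable {V E : Type} [Fintype E] [DecidableEq V] {src tgt : E → V} {X Y R Z : E → ℤ}

theorem isCircZ_iff_sum_mul_incidence :
    IsCircZ src tgt X ↔
      ∀ v, ∑ e, X e * ((if tgt e = v then 1 else 0) - (if src e = v then 1 else 0)) = 0 := by
  simp only [IsCircZ, mul_sub, mul_ite, mul_one, mul_zero, sum_sub_distrib, sub_eq_zero]

namespace IsCircZ

theorem add (hX : IsCircZ src tgt X) (hY : IsCircZ src tgt Y) :
    IsCircZ src tgt (fun e => X e + Y e) := by
  rw [isCircZ_iff_sum_mul_incidence] at *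
  intro v
  simp only [add_mul, sum_add_distrib, hX v, hY v, add_zero]

theorem const_mul (hX : IsCircZ src tgt X) (k : ℤ) : IsCircZ src tgt (fun e => k * X e) := by
  rw [isCircZ_iff_sum_mul_incidence] at *
  intro v
  simp only [mul_assoc, ← mul_sum, hX v, mul_zero]

theorem neg (hX : IsCircZ src tgt X) : IsCircZ src tgt (fun e => -X e) := by
  simpa using hX.const_mul (-1)

theorem sub (hX : IsCircZ src tgt X) (hY : IsCircZ src tgt Y) :
    IsCircZ src tgt (fun e => X e - Y e) := by
  simpa only [sub_eq_add_neg] using hX.add hY.neg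

theorem of_const_mul {k : ℤ} (hk : k ≠ 0) (h : IsCircZ src tgt (fun e => k * X e)) :
    IsCircZ src tgt X := by
  rw [isCircZ_iff_sum_mul_incidence] at *
  intro v
  have hv := h v
  simp only [mul_assoc, ← mul_sum] at hv
  exact (mul_eq_zero.mp hv).resolve_left hk

theorem div (hX : IsCircZ src tgt X) {k : ℤ} (hk : ∀ e, k ∣ X e) :
    IsCircZ src tgt (fun e => X e / k) := by
  rcases eq_or_ne k 0 with rfl | hk0
  · simpa using hX.const_mul 0
  · refine of_const_mul hk0 ?_
    simpa only [Int.mul_ediv_cancel' (hk _)] using hX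

theorem reverse {src' tgt' : E → V} {X' : E → ℤ} (hX : IsCircZ src tgt X)
    (h : ∀ e, (src' e = src e ∧ tgt' e = tgt e ∧ X' e = X e) ∨
      (src' e = tgt e ∧ tgt' e = src e ∧ X' e = -X e)) :
    IsCircZ src' tgt' X' := by
  rw [isCircZ_iff_sum_mul_incidence] at *
  intro v
  refine (sum_congr rfl fun e _ => ?_).trans (hX v)
  rcases h e with ⟨hs, ht, hx⟩ | ⟨hs, ht, hx⟩ <;> rw [hs, ht, hx]
  ring

end IsCircZ

theorem exists_src_eq_tgt_of_nonneg (hR : IsCircZ src tgt R) (hR0 : ∀ e, 0 ≤ R e) {e : E}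
    (he : 0 < R e) : ∃ e', 0 < R e' ∧ src e' = tgt e := by
  have hin : R e ≤ ∑ e', if tgt e' = tgt e then R e' else 0 := by
    simpa using single_le_sum (f := fun e' => if tgt e' = tgt e then R e' else 0)
      (fun e' _ => by split_ifs <;> simp [hR0]) (mem_univ e)
  rw [hR] at hin
  obtain ⟨e', -, he'⟩ := exists_ne_zero_of_sum_ne_zero (he.trans_le hin).ne'
  by_cases h : src e' = tgt e
  · exact ⟨e', (hR0 e').lt_of_ne (by simpa [h, eq_comm] using he'), h⟩
  · simp [h] at he'

theorem exists_successor_of_nonneg (hR : IsCircZ src tgt R) (hR0 : ∀ e, 0 ≤ R e) :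
    ∃ next : E → E, (∀ e, 0 < R e → 0 < R (next e) ∧ src (next e) = tgt e) ∧
      ∀ e, R e ≤ 0 → next e = e := by
  classical
  choose g hg using fun e : {e // 0 < R e} => exists_src_eq_tgt_of_nonneg hR hR0 e.2
  refine ⟨fun e => if h : 0 < R e then g ⟨e, h⟩ else e, fun e he => ?_, fun e he => ?_⟩
  · simpa [he] using hg ⟨e, he⟩
  · simp [not_lt.2 he]

theorem exists_cycle_of_nonneg (hR : IsCircZ src tgt R) (hR0 : ∀ e, 0 ≤ R e) {e₀ : E}
    (he₀ : 0 < R e₀) :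
    ∃ δ : E → ℤ, IsCircZ src tgt δ ∧ (∀ e, δ e = 0 ∨ (δ e = 1 ∧ 0 < R e)) ∧ ∃ e, δ e = 1 := by
  classical
  obtain ⟨next, hnext, hfix⟩ := exists_successor_of_nonneg hR hR0
  set Q : Set E := {e | e ∈ periodicPts next ∧ 0 < R e}
  have hQ : Set.BijOn next Q Q := by
    have hP := bijOn_periodicPts next
    refine ⟨fun e he => ⟨hP.mapsTo he.1, (hnext e he.2).1⟩, hP.injOn.mono fun e he => he.1,
      fun e he => ?_⟩
    obtain ⟨e', he', rfl⟩ := hP.surjOn he.1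
    refine ⟨e', ⟨he', ?_⟩, rfl⟩
    by_contra h
    rw [hfix e' (not_lt.1 h)] at he
    exact h he.2
  obtain ⟨n, hn⟩ := exists_iterate_mem_periodicPts next e₀
  refine ⟨fun e => if e ∈ Q then 1 else 0, fun v => ?_, fun e => ?_,
    ⟨_, if_pos ⟨hn, Iterate.rec (0 < R ·) he₀ (fun e he => (hnext e he).1) n⟩⟩⟩
  · simp only [← ite_and]
    rw [sum_boole, sum_boole, Nat.cast_inj]
    refine card_nbij next (fun e he => ?_) (hQ.injOn.mono fun e he => ?_) (fun e he => ?_) <;>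
      simp only [coe_filter, mem_univ, true_and, Set.mem_ofPred_eq] at he ⊢
    · exact ⟨(hnext e he.2.2).2.trans he.1, hQ.mapsTo he.2⟩
    · exact he.2
    · obtain ⟨e', he', rfl⟩ := hQ.surjOn he.2
      exact ⟨e', by simpa [← (hnext e' he'.2).2] using ⟨he.1, he'⟩, rfl⟩
  · by_cases he : e ∈ Q
    · exact Or.inr ⟨if_pos he, he.2⟩
    · exact Or.inl (if_neg he)

theorem exists_cycle_through_of_nonneg (hR : IsCircZ src tgt R) (hR0 : ∀ e, 0 ≤ R e) {e₀ : E}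
    (he₀ : 0 < R e₀) :
    ∃ δ : E → ℤ, IsCircZ src tgt δ ∧ (∀ e, δ e = 0 ∨ (δ e = 1 ∧ 0 < R e)) ∧ δ e₀ = 1 := by
  induction hN : ∑ e, (R e).toNat using Nat.strong_induction_on generalizing R with
  | _ N ih =>
  obtain ⟨δ, hδ, hδR, e₁, he₁⟩ := exists_cycle_of_nonneg hR hR0 he₀
  by_cases hδe₀ : δ e₀ = 1
  · exact ⟨δ, hδ, hδR, hδe₀⟩
  have hlt : ∑ e, (R e - δ e).toNat < N := hN ▸ sum_lt_sum
    (fun e _ => by have := hδR e; omega) ⟨e₁, mem_univ _, by have := hδR e₁; omega⟩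
  obtain ⟨δ', hδ', hδ'R, hδ'e₀⟩ := ih _ hlt (hR.sub hδ)
    (fun e => by have := hδR e; have := hR0 e; omega)
    (by have := hδR e₀; omega) rfl
  exact ⟨δ', hδ', fun e => by have := hδ'R e; have := hδR e; omega, hδ'e₀⟩

theorem exists_conforming_cycle_through (hR : IsCircZ src tgt R) {e₀ : E} (he₀ : R e₀ ≠ 0) :
    ∃ δ : E → ℤ, IsCircZ src tgt δ ∧
      (∀ e, δ e = 0 ∨ (0 < R e ∧ δ e = 1) ∨ (R e < 0 ∧ δ e = -1)) ∧ δ e₀ ≠ 0 := by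
  classical
  have habs : IsCircZ (fun e => if R e < 0 then tgt e else src e)
      (fun e => if R e < 0 then src e else tgt e) (fun e => |R e|) :=
    hR.reverse fun e => by
      by_cases h : R e < 0
      · simp [h, abs_of_neg h]
      · simp [h, abs_of_nonneg (not_lt.1 h)]
  obtain ⟨δ, hδ, hδR, hδe₀⟩ := exists_cycle_through_of_nonneg habs (fun e => abs_nonneg _)
    (abs_pos.2 he₀)
  refine ⟨fun e => if R e < 0 then -δ e else δ e, hδ.reverse fun e => ?_, fun e => ?_, ?_⟩
  · by_cases h : R e < 0 <;> simp [h]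
  · have := hδR e
    by_cases h : R e < 0
    · rw [abs_of_neg h] at this
      simp only [if_pos h]
      omega
    · rw [abs_of_nonneg (not_lt.1 h)] at this
      simp only [if_neg h]
      omega
  · by_cases h : R e₀ < 0 <;> simp [h, hδe₀]

theorem exists_parity_circulation (hZ : IsCircZ src tgt Z) :
    ∃ σ : E → ℤ, IsCircZ src tgt σ ∧ (∀ e, (σ e).natAbs ≤ 1) ∧ ∀ e, 2 ∣ Z e - σ e := by
  induction hN : ∑ e, (Z e).natAbs using Nat.strong_induction_on generalizing Z with
  | _ N ih =>
  by_cases hsmall : ∀ e, (Z e).natAbs ≤ 1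
  · exact ⟨Z, hZ, hsmall, fun e => by simp⟩
  push Not at hsmall
  obtain ⟨e₀, he₀⟩ := hsmall
  obtain ⟨δ, hδ, hδZ, hδe₀⟩ := exists_conforming_cycle_through hZ (e₀ := e₀) (by omega)
  -- subtracting `2 δ` keeps the parity and shortens `Z` at `e₀`
  have hlt : ∑ e, (Z e - 2 * δ e).natAbs < N := hN ▸ sum_lt_sum
    (fun e _ => by have := hδZ e; omega) ⟨e₀, mem_univ _, by have := hδZ e₀; omega⟩
  obtain ⟨σ, hσ, hσ1, hσZ⟩ := ih _ hlt (hZ.sub (hδ.const_mul 2)) rfl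
  exact ⟨σ, hσ, hσ1, fun e => by have := hσZ e; omega⟩

end Circulation

section Cost

variable {E : Type} [Fintype E] (c : E → ℝ)

theorem circCost_sub (Z W : E → ℤ) :
    circCost c (fun e => Z e - W e) = circCost c Z - circCost c W := by
  simp only [circCost, Int.cast_sub, mul_sub, sum_sub_distrib]

theorem circCost_neg (Z : E → ℤ) : circCost c (fun e => -Z e) = -circCost c Z := by
  simp only [circCost, Int.cast_neg, mul_neg, sum_neg_distrib]

theorem circCost_sum {ι : Type} (s : Finset ι) (Z : ι → E → ℤ) :
    circCost c (fun e => ∑ i ∈ s, Z i e) = ∑ i ∈ s, circCost c (Z i) := by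
  simp only [circCost, Int.cast_sum, mul_sum]
  exact sum_comm

end Cost

section Decomposition

variable {V E : Type} [Fintype E] [DecidableEq V] {src tgt : E → V} (c : E → ℝ) {C : E → ℤ}

theorem exists_split_of_natAbs_le_one (hC : IsCircZ src tgt C) (hC1 : ∀ e, 1 ≤ C e)
    {σ : E → ℤ} (hσ : IsCircZ src tgt σ) (hσ1 : ∀ e, (σ e).natAbs ≤ 1) :
    ∃ A B : E → ℤ, IsCircZ src tgt A ∧ IsCircZ src tgt B ∧ (∀ e, 0 ≤ A e) ∧ (∀ e, 0 ≤ B e) ∧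
      (∀ e, A e - B e = σ e) ∧ circCost c (fun e => A e + B e) ≤ circCost c C := by
  obtain ⟨ρ, hρ, hρ1, hρC, hρc⟩ : ∃ ρ : E → ℤ, IsCircZ src tgt ρ ∧ (∀ e, (ρ e).natAbs ≤ 1) ∧
      (∀ e, 2 ∣ C e - σ e - ρ e) ∧ 0 ≤ circCost c ρ := by
    obtain ⟨ρ, hρ, hρ1, hρC⟩ := exists_parity_circulation (hC.sub hσ)
    rcases le_total 0 (circCost c ρ) with h | h
    · exact ⟨ρ, hρ, hρ1, hρC, h⟩
    · refine ⟨fun e => -ρ e, hρ.neg, fun e => by simpa using hρ1 e,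
        fun e => by have := hρC e; beta_reduce; omega, by rw [circCost_neg]; linarith⟩
  -- `C ± σ - ρ ≥ -1` is even, hence nonnegative
  refine ⟨fun e => (C e + σ e - ρ e) / 2, fun e => (C e - σ e - ρ e) / 2,
    ((hC.add hσ).sub hρ).div fun e => ?_, ((hC.sub hσ).sub hρ).div fun e => ?_,
    fun e => ?_, fun e => ?_, fun e => ?_, ?_⟩
  rotate_right
  · have hAB : (fun e => (C e + σ e - ρ e) / 2 + (C e - σ e - ρ e) / 2) = fun e => C e - ρ e :=
      funext fun e => by have := hρC e; omega
    rw [hAB, circCost_sub]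
    linarith
  all_goals have := hC1 e; have := hσ1 e; have := hρ1 e; have := hρC e; beta_reduce; omega

theorem exists_binary_decomposition (hC : IsCircZ src tgt C) (hC1 : ∀ e, 1 ≤ C e) :
    ∀ (n : ℕ) {Z : E → ℤ}, IsCircZ src tgt Z → (∀ e, (Z e).natAbs ≤ 2 ^ n) →
    ∃ A B : Fin (n + 1) → E → ℤ,
      (∀ i, IsCircZ src tgt (A i) ∧ IsCircZ src tgt (B i) ∧
        (∀ e, 0 ≤ A i e) ∧ (∀ e, 0 ≤ B i e)) ∧
      (∀ e, Z e = ∑ i : Fin (n + 1), 2 ^ (i : ℕ) * (A i e - B i e)) ∧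
      ∀ i, circCost c (fun e => A i e + B i e) ≤ circCost c C
  | 0, Z, hZ, hZ1 => by
    obtain ⟨A, B, hA, hB, hA0, hB0, hAB, hcost⟩ :=
      exists_split_of_natAbs_le_one c hC hC1 hZ (by simpa using hZ1)
    exact ⟨fun _ => A, fun _ => B, fun _ => ⟨hA, hB, hA0, hB0⟩, fun e => by simp [hAB],
      fun _ => hcost⟩
  | n + 1, Z, hZ, hZn => by
    obtain ⟨σ, hσ, hσ1, hZσ⟩ := exists_parity_circulation hZ
    obtain ⟨A₀, B₀, hA₀, hB₀, hA₀0, hB₀0, hAB₀, hcost₀⟩ :=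
      exists_split_of_natAbs_le_one c hC hC1 hσ hσ1
    obtain ⟨A, B, hAB, hsum, hcost⟩ := exists_binary_decomposition hC hC1 n ((hZ.sub hσ).div hZσ)
      fun e => by have := hZn e; have := hσ1 e; have := hZσ e; rw [pow_succ] at *; omega
    refine ⟨Fin.cons A₀ A, Fin.cons B₀ B, Fin.forall_fin_succ.2 ⟨?_, ?_⟩, fun e => ?_,
      Fin.forall_fin_succ.2 ⟨?_, ?_⟩⟩
    · exact ⟨hA₀, hB₀, hA₀0, hB₀0⟩
    · simpa using hAB
    · rw [Fin.sum_univ_succ]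
      simp only [Fin.cons_zero, Fin.cons_succ, Fin.val_zero, Fin.val_succ, pow_zero, one_mul,
        pow_succ, mul_comm _ (2 : ℤ), mul_assoc, ← mul_sum, ← hsum e, hAB₀ e]
      have := hZσ e
      omega
    · exact hcost₀
    · simpa using hcost

end Decomposition

section MinimumCost

variable {V E : Type} [Fintype E] [DecidableEq V] {src tgt : E → V} {c : E → ℝ}

theorem finite_setOf_circCost_le (hc : ∀ e, 0 ≤ c e) (K : ℝ) :
    {r | ∃ C : E → ℤ, (∀ e, 1 ≤ C e) ∧ circCost c C = r ∧ r ≤ K}.Finite := by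
  -- each term `c e * C e` lies in `[0, K]`, so it takes one of finitely many values
  refine ((Set.Finite.pi fun e => ((Set.finite_Icc 1 ⌈K / c e⌉).image
    fun m : ℤ => c e * m).insert 0).image fun g : E → ℝ => ∑ e, g e).subset ?_
  rintro r ⟨C, hC1, rfl, hK⟩
  refine ⟨fun e => c e * C e, fun e _ => ?_, rfl⟩
  rcases (hc e).eq_or_lt with h | h
  · exact Or.inl (by simp [← h])
  · refine Or.inr ⟨C e, ⟨hC1 e, ?_⟩, rfl⟩
    have hterm : c e * C e ≤ K := (single_le_sum (f := fun e => c e * C e)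
      (fun e _ => mul_nonneg (hc e) (by exact_mod_cast (zero_le_one.trans (hC1 e))))
      (mem_univ e)).trans hK
    exact_mod_cast ((le_div_iff₀' h).2 hterm).trans (Int.le_ceil _)

theorem exists_circCost_eq_mccc (hc : ∀ e, 0 ≤ c e)
    (hcov : ∃ C : E → ℤ, IsCircZ src tgt C ∧ ∀ e, 1 ≤ C e) :
    ∃ C : E → ℤ, IsCircZ src tgt C ∧ (∀ e, 1 ≤ C e) ∧ circCost c C = mccc src tgt c := by
  obtain ⟨C₀, hC₀, hC₀1⟩ := hcov
  set S := {r : ℝ | ∃ C : E → ℤ, IsCircZ src tgt C ∧ (∀ e, 1 ≤ C e) ∧ r = circCost c C}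
  have hfin : (S ∩ Set.Iic (circCost c C₀)).Finite :=
    (finite_setOf_circCost_le hc _).subset fun r ⟨⟨C, _, hC1, hr⟩, hrK⟩ => ⟨C, hC1, hr.symm, hrK⟩
  obtain ⟨r, ⟨⟨C, hC, hC1, rfl⟩, hrK⟩, hmin⟩ :=
    Set.exists_min_image _ id hfin ⟨_, ⟨C₀, hC₀, hC₀1, rfl⟩, Set.mem_Iic.2 le_rfl⟩
  refine ⟨C, hC, hC1, (IsLeast.csInf_eq (s := S) ⟨⟨C, hC, hC1, rfl⟩, fun r hr => ?_⟩).symm⟩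
  rcases le_or_gt r (circCost c C₀) with h | h
  exacts [hmin r ⟨hr, h⟩, hrK.trans h.le]

end MinimumCost

theorem stmt_3_general {V E : Type} [Fintype E] [DecidableEq V] (src tgt : E → V)
    (c : E → ℝ) (hc : ∀ e, 0 ≤ c e)
    (hcov : ∃ C : E → ℤ, IsCircZ src tgt C ∧ ∀ e, 1 ≤ C e)
    (X : E → ℤ) (hX : IsCircZ src tgt X) :
    ∃ A B : Fin (Nat.clog 2 (circNorm X) + 1) → E → ℤ,
      (∀ i, IsCircZ src tgt (A i) ∧ IsCircZ src tgt (B i) ∧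
        (∀ e, 0 ≤ A i e) ∧ (∀ e, 0 ≤ B i e)) ∧
      (∀ e, X e = ∑ i : Fin (Nat.clog 2 (circNorm X) + 1),
        2 ^ (i : ℕ) * (A i e - B i e)) ∧
      circCost c (fun e => (∑ i : Fin (Nat.clog 2 (circNorm X) + 1), (A i e + B i e)))
        ≤ (Nat.clog 2 (circNorm X) + 1) * mccc src tgt c := by
  obtain ⟨C, hC, hC1, hCcost⟩ := exists_circCost_eq_mccc hc hcov
  have hXn : ∀ e, (X e).natAbs ≤ 2 ^ Nat.clog 2 (circNorm X) := fun e =>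
    (le_sup (f := fun e => (X e).natAbs) (mem_univ e)).trans (Nat.le_pow_clog one_lt_two _)
  obtain ⟨A, B, hAB, hsum, hcost⟩ := exists_binary_decomposition c hC hC1 _ hX hXn
  refine ⟨A, B, hAB, hsum, ?_⟩
  calc circCost c (fun e => ∑ i, (A i e + B i e))
      = ∑ i, circCost c (fun e => A i e + B i e) := circCost_sum c _ _
    _ ≤ ∑ _i : Fin (Nat.clog 2 (circNorm X) + 1), mccc src tgt c :=
      sum_le_sum fun i _ => hCcost ▸ hcost i
    _ = (Nat.clog 2 (circNorm X) + 1) * mccc src tgt c := by simp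

/-- Any nonzero circulation `X` decomposes as `∑ 2^i (A_i - B_i)` with `A_i, B_i`
nonnegative circulations of total cost at most `(k+1)·mccc(G)`, `k = ⌈log₂ ‖X‖⌉`. -/
theorem stmt_3 {V E : Type} [Fintype E] [DecidableEq V] (src tgt : E → V)
    (c : E → ℝ) (hc : ∀ e, 0 ≤ c e)
    (hcov : ∃ C : E → ℤ, IsCircZ src tgt C ∧ ∀ e, 1 ≤ C e)
    (X : E → ℤ) (hX : IsCircZ src tgt X) (hX0 : X ≠ 0) :
    ∃ A B : Fin (Nat.clog 2 (circNorm X) + 1) → E → ℤ,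
      (∀ i, IsCircZ src tgt (A i) ∧ IsCircZ src tgt (B i) ∧
        (∀ e, 0 ≤ A i e) ∧ (∀ e, 0 ≤ B i e)) ∧
      (∀ e, X e = ∑ i : Fin (Nat.clog 2 (circNorm X) + 1),
        2 ^ (i : ℕ) * (A i e - B i e)) ∧
      circCost c (fun e => (∑ i : Fin (Nat.clog 2 (circNorm X) + 1), (A i e + B i e)))
        ≤ (Nat.clog 2 (circNorm X) + 1) * mccc src tgt c :=
  stmt_3_general src tgt c hc hcov X hX
end

section
/- Let G be a width-stable s-t DAG with width(G) ≥ 2. For any flow X : E → ℕ, the greedy-weight algorithm (repeatedly removing a heaviest s-t path with its maximum carryable weight) decomposes X using at most ⌊log |X| / log(width(G)/(width(G)−1))⌋ + 1 paths, where |X| is the total flow out of s. -/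
open Finset

def IsWalk {V E : Type} (src tgt : E → V) : V → V → List E → Prop
  | a, b, [] => a = b
  | a, b, e :: L => src e = a ∧ IsWalk src tgt (tgt e) b L

def IsPath {V E : Type} (src tgt : E → V) (s t : V) (L : List E) : Prop :=
  L ≠ [] ∧ IsWalk src tgt s t L

def IsDAG {V E : Type} (src tgt : E → V) : Prop :=
  ∀ (v : V) (L : List E), L ≠ [] → ¬ IsWalk src tgt v v L

/-- Width of the subgraph on the edge set `S`: the minimum number of `s`-`t` paths
using only edges of `S` and covering all edges of `S`. -/
noncomputable def widthIn {V E : Type} [Fintype E] (src tgt : E → V) (s t : V)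
    (S : Set E) : ℕ :=
  sInf {k | ∃ P : Fin k → List E,
    (∀ i, IsPath src tgt s t (P i) ∧ ∀ e ∈ P i, e ∈ S) ∧ ∀ e ∈ S, ∃ i, e ∈ P i}

def IsFlowN {V E : Type} [Fintype E] [DecidableEq V] (src tgt : E → V) (s t : V)
    (X : E → ℕ) : Prop :=
  ∀ v : V, v ≠ s → v ≠ t →
    (∑ e, if tgt e = v then X e else 0) = ∑ e, if src e = v then X e else 0

/-- Total flow out of the source `s`. -/
def flowValue {V E : Type} [Fintype E] [DecidableEq V] (src : E → V) (s : V)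
    (X : E → ℕ) : ℕ :=
  ∑ e, if src e = s then X e else 0

/-- `G` is width-stable: the width of the support subgraph is monotone in the flow. -/
def WidthStable {V E : Type} [Fintype E] [DecidableEq V] (src tgt : E → V)
    (s t : V) : Prop :=
  ∀ X Y : E → ℕ, IsFlowN src tgt s t X → IsFlowN src tgt s t Y → (∀ e, X e ≤ Y e) →
    widthIn src tgt s t {e | X e ≠ 0} ≤ widthIn src tgt s t {e | Y e ≠ 0}


/-!
Subtracting a path with weight `w` from a flow keeps a flow and lowers its value by `w`.
The key estimate: a flow `Z` of value `M` has an `s`-`t` path all of whose edges carry more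
than `c` as soon as `width (supp Z) * c < M`. With width-stability, `width (supp Z) ≤ b`, so the
heaviest weight is at least `M / b` and every greedy step multiplies the value by at most
`(b - 1) / b`; after `⌊log M / log (b / (b - 1))⌋ + 1` steps a nonzero flow would have value
below `1`.

The estimate is proved by contradiction. Let `R` be the set of vertices reachable from `s` along
edges carrying more than `c`, and `T` the set of vertices outside `R` from which `t` is reachable
along positive edges that avoid `R`. The positive edges entering `T` carry the whole value `M`
across the cut, and each carries at most `c`, so there are more than `width (supp Z)` of them.
Routing one `s`-`t` path through each of them (inside `R`, then inside `T`) gives a flow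
supported in `supp Z` in which no path meets two of these edges; its width therefore exceeds
`width (supp Z)`, contradicting width-stability.
-/

section GreedyWeight

variable {V E : Type} {src tgt : E → V}

namespace IsWalk

variable {a b c : V} {e : E} {L L₁ L₂ : List E}

theorem append (h₁ : IsWalk src tgt a b L₁) (h₂ : IsWalk src tgt b c L₂) :
    IsWalk src tgt a c (L₁ ++ L₂) := by
  induction L₁ generalizing a with
  | nil => cases (h₁ : a = b); exact h₂
  | cons f L ih => exact ⟨h₁.1, ih h₁.2⟩

theorem of_append_cons (h : IsWalk src tgt a c (L₁ ++ e :: L₂)) :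
    IsWalk src tgt a (src e) L₁ ∧ IsWalk src tgt (tgt e) c L₂ := by
  induction L₁ generalizing a with
  | nil => exact ⟨h.1.symm, h.2⟩
  | cons f L ih => exact ⟨⟨h.1, (ih h.2).1⟩, (ih h.2).2⟩

theorem nodup (hdag : IsDAG src tgt) (h : IsWalk src tgt a b L) : L.Nodup := by
  induction L generalizing a with
  | nil => exact List.nodup_nil
  | cons f L ih =>
    refine List.nodup_cons.mpr ⟨fun hf => ?_, ih h.2⟩
    obtain ⟨L₁, L₂, rfl⟩ := List.append_of_mem hf
    exact hdag (src f) (f :: L₁) (List.cons_ne_nil _ _) ⟨rfl, (of_append_cons h.2).1⟩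

theorem src_ne {s : V} (hs : ∀ e, tgt e ≠ s) (h : IsWalk src tgt a b L) (ha : a ≠ s) :
    ∀ f ∈ L, src f ≠ s := by
  induction L generalizing a with
  | nil => simp
  | cons f L ih =>
    intro g hg
    rcases List.mem_cons.mp hg with rfl | hg
    · exact h.1 ▸ ha
    · exact ih h.2 (hs f) g hg

theorem countP_src_add [DecidableEq V] (h : IsWalk src tgt a b L) (v : V) :
    L.countP (fun f => src f = v) + (if b = v then 1 else 0)
      = L.countP (fun f => tgt f = v) + (if a = v then 1 else 0) := by
  induction L generalizing a with
  | nil => cases (h : a = b); rfl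
  | cons f L ih =>
    have := ih h.2
    simp only [List.countP_cons, h.1, decide_eq_true_eq] at this ⊢
    split_ifs at this ⊢ <;> omega

theorem forall_src_of_closed {T : V → Prop} (h : IsWalk src tgt a b L)
    (hT : ∀ f ∈ L, T (src f) → T (tgt f)) (ha : T a) : ∀ f ∈ L, T (src f) := by
  induction L generalizing a with
  | nil => simp
  | cons f L ih =>
    intro g hg
    rcases List.mem_cons.mp hg with rfl | hg
    · exact h.1 ▸ ha
    · exact ih h.2 (fun f' hf' => hT f' (.tail _ hf')) (hT f (.head _) (h.1 ▸ ha)) g hg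

theorem eq_of_enters {T : V → Prop} (h : IsWalk src tgt a b L)
    (hT : ∀ f ∈ L, T (src f) → T (tgt f)) {e₁ e₂ : E} (h₁ : e₁ ∈ L) (h₂ : e₂ ∈ L)
    (hc₁ : ¬ T (src e₁) ∧ T (tgt e₁)) (hc₂ : ¬ T (src e₂) ∧ T (tgt e₂)) : e₁ = e₂ := by
  induction L generalizing a with
  | nil => simp at h₁
  | cons f L ih =>
    have hT' : ∀ g ∈ L, T (src g) → T (tgt g) := fun g hg => hT g (.tail _ hg)
    by_cases hf : T (tgt f)
    · have hL := forall_src_of_closed h.2 hT' hf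
      have h₁f : e₁ = f := (List.mem_cons.mp h₁).resolve_right fun he => hc₁.1 (hL e₁ he)
      have h₂f : e₂ = f := (List.mem_cons.mp h₂).resolve_right fun he => hc₂.1 (hL e₂ he)
      rw [h₁f, h₂f]
    · have h₁L : e₁ ∈ L := (List.mem_cons.mp h₁).resolve_left fun he => hf (he ▸ hc₁.2)
      have h₂L : e₂ ∈ L := (List.mem_cons.mp h₂).resolve_left fun he => hf (he ▸ hc₂.2)
      exact ih h.2 hT' h₁L h₂L

end IsWalk

def pathFlow [DecidableEq E] {ι : Type*} [Fintype ι] (r : ι → List E) (e : E) : ℕ :=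
  ∑ i, (r i).count e

theorem pathFlow_ne_zero_iff [DecidableEq E] {ι : Type*} [Fintype ι] {r : ι → List E}
    {e : E} : pathFlow r e ≠ 0 ↔ ∃ i, e ∈ r i := by
  simp [pathFlow, sum_eq_zero_iff, List.count_eq_zero]

section Flow

variable [Fintype E] [DecidableEq V] {s t : V} {Y Z : E → ℕ}

theorem sum_ite_count [DecidableEq E] (p : E → Prop) [DecidablePred p] (L : List E) :
    (∑ e, if p e then L.count e else 0) = L.countP (fun e => p e) := by
  rw [← sum_filter, ← sum_filter_count_eq_countP]
  refine (sum_subset (by intro e; simp +contextual) fun e he hne => ?_).symm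
  exact List.count_eq_zero_of_not_mem fun h => hne (by simp_all)

theorem isFlowN_count [DecidableEq E] {L : List E} (h : IsWalk src tgt s t L) :
    IsFlowN src tgt s t (fun e => L.count e) := by
  intro v hvs hvt
  have := h.countP_src_add v
  rw [if_neg (Ne.symm hvt), if_neg (Ne.symm hvs)] at this
  simp only [sum_ite_count]
  omega

namespace IsFlowN

theorem add (hY : IsFlowN src tgt s t Y) (hZ : IsFlowN src tgt s t Z) :
    IsFlowN src tgt s t (fun e => Y e + Z e) := by
  intro v hvs hvt
  have hYv := hY v hvs hvt
  have hZv := hZ v hvs hvt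
  simp only [← sum_filter] at hYv hZv ⊢
  rw [sum_add_distrib, sum_add_distrib, hYv, hZv]

theorem sub (hZ : IsFlowN src tgt s t Z) (hY : IsFlowN src tgt s t Y)
    (hYZ : ∀ e, Y e ≤ Z e) : IsFlowN src tgt s t (fun e => Z e - Y e) := by
  intro v hvs hvt
  have hYv := hY v hvs hvt
  have hZv := hZ v hvs hvt
  simp only [← sum_filter] at hYv hZv ⊢
  rw [sum_tsub_distrib _ fun e _ => hYZ e, sum_tsub_distrib _ fun e _ => hYZ e, hYv, hZv]

theorem const_mul (hZ : IsFlowN src tgt s t Z) (c : ℕ) :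
    IsFlowN src tgt s t (fun e => c * Z e) := by
  intro v hvs hvt
  have hZv := hZ v hvs hvt
  simp only [← sum_filter] at hZv ⊢
  rw [← mul_sum, ← mul_sum, hZv]

theorem sum {ι : Type*} {I : Finset ι} {F : ι → E → ℕ}
    (hF : ∀ i ∈ I, IsFlowN src tgt s t (F i)) :
    IsFlowN src tgt s t (fun e => ∑ i ∈ I, F i e) := by
  intro v hvs hvt
  simp only [← sum_filter]
  rw [sum_comm, sum_comm (s := filter _ _)]
  exact sum_congr rfl fun i hi => by simpa only [← sum_filter] using hF i hi v hvs hvt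

end IsFlowN

theorem IsFlowN.sub_path [DecidableEq E] (hdag : IsDAG src tgt) (hZ : IsFlowN src tgt s t Z)
    {L : List E} (hL : IsWalk src tgt s t L) {c : ℕ} (hc : ∀ e ∈ L, c ≤ Z e) :
    IsFlowN src tgt s t (fun e => Z e - if e ∈ L then c else 0) := by
  have hind : (fun e => if e ∈ L then c else 0) = fun e => c * L.count e := by
    ext e
    by_cases he : e ∈ L
    · simp [he, List.count_eq_one_of_mem (hL.nodup hdag) he]
    · simp [he, List.count_eq_zero_of_not_mem he]
  refine hZ.sub (hind ▸ (isFlowN_count hL).const_mul c) fun e => ?_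
  split_ifs with he
  exacts [hc e he, Nat.zero_le _]

theorem isFlowN_pathFlow [DecidableEq E] {ι : Type*} [Fintype ι] {r : ι → List E}
    (hr : ∀ i, IsWalk src tgt s t (r i)) : IsFlowN src tgt s t (pathFlow r) :=
  IsFlowN.sum fun i _ => isFlowN_count (hr i)

theorem flowValue_mono (h : ∀ e, Y e ≤ Z e) : flowValue src s Y ≤ flowValue src s Z :=
  sum_le_sum fun e _ => by split_ifs <;> simp [h e]

theorem flowValue_sub (h : ∀ e, Y e ≤ Z e) :
    flowValue src s (fun e => Z e - Y e) = flowValue src s Z - flowValue src s Y := by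
  simp only [flowValue, ← sum_filter]
  exact sum_tsub_distrib _ fun e _ => h e

theorem flowValue_indicator [DecidableEq E] (hs : ∀ e, tgt e ≠ s) {L : List E}
    (hL : IsPath src tgt s t L) (c : ℕ) :
    flowValue src s (fun e => if e ∈ L then c else 0) = c := by
  obtain ⟨e₀, L', rfl⟩ := List.exists_cons_of_ne_nil hL.1
  have hL' := hL.2.2.src_ne hs (hs e₀)
  rw [flowValue, sum_eq_single e₀ (fun e _ he => ?_) (by simp)]
  · simp [hL.2.1]
  · by_cases he' : e ∈ L'
    · simp [hL' e he']
    · simp [he, he']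

theorem sum_ite_comp_eq_sum_sum_ite {f : E → V} {W : Finset V} (hW : ∀ e, f e ∈ W)
    (p : V → Prop) [DecidablePred p] (Z : E → ℕ) :
    (∑ e, if p (f e) then Z e else 0) = ∑ v ∈ W with p v, ∑ e, if f e = v then Z e else 0 := by
  rw [← sum_filter, ← sum_fiberwise_of_maps_to (t := W.filter p) (g := f) (by simp_all)]
  refine sum_congr rfl fun v hv => ?_
  rw [filter_filter, ← sum_filter]
  congr 1
  ext e
  aesop

theorem flowValue_cut (hs : ∀ e, tgt e ≠ s) (hZ : IsFlowN src tgt s t Z)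
    (U : V → Prop) [DecidablePred U] (htU : ¬ U t) :
    (∑ e, if U (src e) ∧ ¬ U (tgt e) then Z e else 0)
      = (∑ e, if ¬ U (src e) ∧ U (tgt e) then Z e else 0)
        + if U s then flowValue src s Z else 0 := by
  -- `s` is put into `W` so that its term is present even when no edge leaves it.
  let W := insert s (univ.image src ∪ univ.image tgt)
  have hout := sum_ite_comp_eq_sum_sum_ite (W := W) (f := src) (by simp [W]) U Z
  have hin := sum_ite_comp_eq_sum_sum_ite (W := W) (f := tgt) (by simp [W]) U Z
  have hsplit_out : (∑ e, if U (src e) then Z e else 0)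
      = (∑ e, if U (src e) ∧ ¬ U (tgt e) then Z e else 0)
        + ∑ e, if U (src e) ∧ U (tgt e) then Z e else 0 := by
    rw [← sum_add_distrib]
    exact sum_congr rfl fun e _ => by by_cases U (src e) <;> by_cases U (tgt e) <;> simp [*]
  have hsplit_in : (∑ e, if U (tgt e) then Z e else 0)
      = (∑ e, if ¬ U (src e) ∧ U (tgt e) then Z e else 0)
        + ∑ e, if U (src e) ∧ U (tgt e) then Z e else 0 := by
    rw [← sum_add_distrib]
    exact sum_congr rfl fun e _ => by by_cases U (src e) <;> by_cases U (tgt e) <;> simp [*]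
  have hconserve : (∑ v ∈ W with U v, ∑ e, if src e = v then Z e else 0)
      = (∑ v ∈ W with U v, ∑ e, if tgt e = v then Z e else 0)
        + if U s then flowValue src s Z else 0 := by
    have hs_sum : (if U s then flowValue src s Z else 0)
        = ∑ v ∈ W with U v, if v = s then flowValue src s Z else 0 := by
      simp [sum_ite_eq', W]
    rw [hs_sum, ← sum_add_distrib]
    refine sum_congr rfl fun v hv => ?_
    have hvt : v ≠ t := fun h => htU (h ▸ (mem_filter.mp hv).2)
    by_cases hvs : v = s
    · subst hvs
      simp [flowValue, hs]
    · simp [hvs, hZ v hvs hvt]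
  omega

theorem flowValue_pos (hdag : IsDAG src tgt) (hs : ∀ e, tgt e ≠ s) (ht : ∀ e, src e ≠ t)
    (hZ : IsFlowN src tgt s t Z) {e₀ : E} (he₀ : Z e₀ ≠ 0) : 0 < flowValue src s Z := by
  classical
  -- No positive edge enters the set `U` of positive ancestors of `e₀`, but `e₀` leaves it;
  -- by `flowValue_cut` this forces `s ∈ U` and a positive value.
  let U : V → Prop := fun v => ∃ L, IsWalk src tgt v (src e₀) L ∧ ∀ f ∈ L, 0 < Z f
  have htU : ¬ U t := by
    rintro ⟨L, hL, -⟩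
    cases L with
    | nil => exact ht e₀ (hL : t = src e₀).symm
    | cons f L => exact ht f hL.1
  have hin : (∑ e, if ¬ U (src e) ∧ U (tgt e) then Z e else 0) = 0 := by
    refine sum_eq_zero fun f _ => ?_
    split_ifs with hf
    · obtain ⟨L, hL, hpos⟩ := hf.2
      by_contra hZf
      exact hf.1 ⟨f :: L, ⟨rfl, hL⟩, by simpa [Nat.pos_of_ne_zero hZf] using hpos⟩
    · rfl
  have he₀U : U (src e₀) ∧ ¬ U (tgt e₀) :=
    ⟨⟨[], rfl, by simp⟩, fun ⟨L, hL, _⟩ => hdag (src e₀) (e₀ :: L) (by simp) ⟨rfl, hL⟩⟩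
  have hout : Z e₀ ≤ ∑ e, if U (src e) ∧ ¬ U (tgt e) then Z e else 0 := by
    simpa [he₀U] using single_le_sum (fun e _ => Nat.zero_le
      (if U (src e) ∧ ¬ U (tgt e) then Z e else 0)) (mem_univ e₀)
  have hcut := flowValue_cut hs hZ U htU
  rw [hin, zero_add] at hcut
  split_ifs at hcut <;> omega

end Flow

section Width

variable {s t : V}

def IsPathCover (src tgt : E → V) (s t : V) (S : Set E) {k : ℕ} (P : Fin k → List E) : Prop :=
  (∀ i, IsPath src tgt s t (P i) ∧ ∀ e ∈ P i, e ∈ S) ∧ ∀ e ∈ S, ∃ i, e ∈ P i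

theorem isPathCover_pathFlow [DecidableEq E] {ι : Type*} [Fintype ι] {r : ι → List E}
    (hr : ∀ i, IsPath src tgt s t (r i)) :
    IsPathCover src tgt s t {e | pathFlow r e ≠ 0} (r ∘ (Fintype.equivFin ι).symm) := by
  refine ⟨fun i => ⟨hr _, fun e he => pathFlow_ne_zero_iff.mpr ⟨_, he⟩⟩, fun e he => ?_⟩
  obtain ⟨i, hi⟩ := pathFlow_ne_zero_iff.mp he
  exact ⟨Fintype.equivFin ι i, by simpa using hi⟩

variable [Fintype E]

theorem exists_isPathCover_widthIn {S : Set E}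
    (h : ∃ k, ∃ P : Fin k → List E, IsPathCover src tgt s t S P) :
    ∃ P : Fin (widthIn src tgt s t S) → List E, IsPathCover src tgt s t S P :=
  Nat.sInf_mem h

theorem exists_isPathCover_of_widthIn_pos {S : Set E} (h : 0 < widthIn src tgt s t S) :
    ∃ k, ∃ P : Fin k → List E, IsPathCover src tgt s t S P :=
  Nat.nonempty_of_pos_sInf h

theorem card_le_widthIn {S : Set E}
    (hS : ∃ k, ∃ P : Fin k → List E, IsPathCover src tgt s t S P) {C : Finset E}
    (hCS : ∀ e ∈ C, e ∈ S)
    (hC : ∀ L, IsPath src tgt s t L → (∀ e ∈ L, e ∈ S) →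
      ∀ e₁ ∈ C, ∀ e₂ ∈ C, e₁ ∈ L → e₂ ∈ L → e₁ = e₂) :
    C.card ≤ widthIn src tgt s t S := by
  obtain ⟨P, hP, hcover⟩ := exists_isPathCover_widthIn hS
  choose φ hφ using fun e : C => hcover e (hCS e e.2)
  have hφ_inj : Function.Injective φ := fun e₁ e₂ h =>
    Subtype.ext (hC _ (hP _).1 (hP _).2 e₁ e₁.2 e₂ e₂.2 (hφ e₁) (h ▸ hφ e₂))
  simpa using Fintype.card_le_of_injective φ hφ_inj

theorem widthIn_support_le [DecidableEq V] [DecidableEq E] (hstable : WidthStable src tgt s t)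
    (hb : 0 < widthIn src tgt s t Set.univ) {Z : E → ℕ} (hZ : IsFlowN src tgt s t Z) :
    widthIn src tgt s t {e | Z e ≠ 0} ≤ widthIn src tgt s t Set.univ := by
  obtain ⟨k, Q, hQ, hcover⟩ := exists_isPathCover_of_widthIn_pos hb
  have hfull : {e | Z e + pathFlow Q e ≠ 0} = Set.univ := Set.eq_univ_of_forall fun e => by
    have := pathFlow_ne_zero_iff.mpr (hcover e (Set.mem_univ e))
    show Z e + pathFlow Q e ≠ 0
    omega
  have := hstable Z _ hZ (hZ.add (isFlowN_pathFlow fun i => (hQ i).1.2))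
    fun e => Nat.le_add_right _ _
  rwa [hfull] at this

end Width

section Bottleneck

def HeavyReachable (src tgt : E → V) (s : V) (Z : E → ℕ) (c : ℕ) (v : V) : Prop :=
  ∃ L, IsWalk src tgt s v L ∧ ∀ e ∈ L, c < Z e

def SinkSide (src tgt : E → V) (s t : V) (Z : E → ℕ) (c : ℕ) (v : V) : Prop :=
  ¬ HeavyReachable src tgt s Z c v ∧
    ∃ L, IsWalk src tgt v t L ∧ ∀ e ∈ L, 0 < Z e ∧ ¬ HeavyReachable src tgt s Z c (tgt e)

variable {s t v : V} {Z : E → ℕ} {c : ℕ} {e f : E} {L : List E}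

theorem HeavyReachable.tgt_of_lt (h : HeavyReachable src tgt s Z c (src e)) (he : c < Z e) :
    HeavyReachable src tgt s Z c (tgt e) := by
  obtain ⟨L, hL, hheavy⟩ := h
  exact ⟨L ++ [e], hL.append ⟨rfl, rfl⟩, by simpa [or_imp, forall_and, he] using hheavy⟩

theorem heavyReachable_src_of_mem (hL : IsWalk src tgt s v L) (hheavy : ∀ e ∈ L, c < Z e)
    (hf : f ∈ L) : HeavyReachable src tgt s Z c (src f) := by
  obtain ⟨L₁, L₂, rfl⟩ := List.append_of_mem hf
  exact ⟨L₁, hL.of_append_cons.1, fun e he => hheavy e (List.mem_append_left _ he)⟩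

theorem SinkSide.of_edge (h : SinkSide src tgt s t Z c (tgt e)) (hpos : 0 < Z e)
    (hsrc : ¬ HeavyReachable src tgt s Z c (src e)) : SinkSide src tgt s t Z c (src e) := by
  obtain ⟨hR, L, hL, hgood⟩ := h
  exact ⟨hsrc, e :: L, ⟨rfl, hL⟩, by simpa [hpos, hR] using hgood⟩

theorem sinkSide_tgt_of_mem (hL : IsWalk src tgt v t L)
    (hgood : ∀ e ∈ L, 0 < Z e ∧ ¬ HeavyReachable src tgt s Z c (tgt e)) (hf : f ∈ L) :
    SinkSide src tgt s t Z c (tgt f) := by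
  obtain ⟨L₁, L₂, rfl⟩ := List.append_of_mem hf
  exact ⟨(hgood f hf).2, L₂, hL.of_append_cons.2, fun e he => hgood e (by simp [he])⟩

theorem heavyReachable_src_of_enters (hpos : 0 < Z e)
    (hsrc : ¬ SinkSide src tgt s t Z c (src e)) (htgt : SinkSide src tgt s t Z c (tgt e)) :
    HeavyReachable src tgt s Z c (src e) := by
  by_contra h
  exact hsrc (htgt.of_edge hpos h)

theorem le_of_enters (hpos : 0 < Z e) (hsrc : ¬ SinkSide src tgt s t Z c (src e))
    (htgt : SinkSide src tgt s t Z c (tgt e)) : Z e ≤ c := by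
  by_contra h
  exact htgt.1 ((heavyReachable_src_of_enters hpos hsrc htgt).tgt_of_lt (not_le.mp h))

theorem exists_walk_through_of_enters (hpos : 0 < Z e)
    (hsrc : ¬ SinkSide src tgt s t Z c (src e)) (htgt : SinkSide src tgt s t Z c (tgt e)) :
    ∃ L, IsWalk src tgt s t L ∧ e ∈ L ∧
      ∀ f ∈ L, 0 < Z f ∧
        (SinkSide src tgt s t Z c (src f) → SinkSide src tgt s t Z c (tgt f)) := by
  obtain ⟨L₁, hL₁, hheavy⟩ := heavyReachable_src_of_enters hpos hsrc htgt
  obtain ⟨-, L₂, hL₂, hgood⟩ := htgt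
  refine ⟨L₁ ++ e :: L₂, hL₁.append ⟨rfl, hL₂⟩, by simp, fun f hf => ?_⟩
  rcases List.mem_append.mp hf with hf | hf
  · exact ⟨(Nat.zero_le c).trans_lt (hheavy f hf),
      fun hT => absurd (heavyReachable_src_of_mem hL₁ hheavy hf) hT.1⟩
  rcases List.mem_cons.mp hf with rfl | hf
  · exact ⟨hpos, fun hT => absurd hT hsrc⟩
  · exact ⟨(hgood f hf).1, fun _ => sinkSide_tgt_of_mem hL₂ hgood hf⟩

theorem card_le_widthIn_support_of_enters [DecidableEq V] [Fintype E]
    (hstable : WidthStable src tgt s t) (hZ : IsFlowN src tgt s t Z) {C : Finset E}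
    (hC : ∀ e ∈ C, 0 < Z e ∧ ¬ SinkSide src tgt s t Z c (src e) ∧
      SinkSide src tgt s t Z c (tgt e)) :
    C.card ≤ widthIn src tgt s t {e | Z e ≠ 0} := by
  classical
  choose r hr using fun e : C => exists_walk_through_of_enters (hC e e.2).1 (hC e e.2).2.1
    (hC e e.2).2.2
  have hA : IsFlowN src tgt s t (pathFlow r) := isFlowN_pathFlow fun e => (hr e).1
  have hAZ (f : E) (hf : pathFlow r f ≠ 0) : 0 < Z f ∧
      (SinkSide src tgt s t Z c (src f) → SinkSide src tgt s t Z c (tgt f)) := by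
    obtain ⟨e, he⟩ := pathFlow_ne_zero_iff.mp hf
    exact (hr e).2.2 f he
  have hwidth :
      widthIn src tgt s t {f | pathFlow r f ≠ 0} ≤ widthIn src tgt s t {f | Z f ≠ 0} := by
    have hsupp : {f | pathFlow r f + Z f ≠ 0} = {f | Z f ≠ 0} := Set.ext fun f => by
      by_cases hf : pathFlow r f = 0
      · simp [hf]
      · simp [hf, (hAZ f hf).1.ne']
    have h := hstable _ _ hA (hA.add hZ) fun f => Nat.le_add_right _ _
    rwa [hsupp] at h
  refine le_trans (card_le_widthIn ⟨_, _, isPathCover_pathFlow fun e =>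
      ⟨List.ne_nil_of_mem (hr e).2.1, (hr e).1⟩⟩
    (fun e he => pathFlow_ne_zero_iff.mpr ⟨⟨e, he⟩, (hr _).2.1⟩)
    fun L hL hLA e₁ he₁ e₂ he₂ h₁ h₂ => ?_) hwidth
  exact hL.2.eq_of_enters (fun f hf => (hAZ f (hLA f hf)).2) h₁ h₂
    (hC e₁ he₁).2 (hC e₂ he₂).2

theorem exists_path_lt_of_widthIn_mul_lt [DecidableEq V] [Fintype E]
    (hs : ∀ e, tgt e ≠ s) (ht : ∀ e, src e ≠ t) (hstable : WidthStable src tgt s t)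
    (hZ : IsFlowN src tgt s t Z)
    (hc : widthIn src tgt s t {e | Z e ≠ 0} * c < flowValue src s Z) :
    ∃ L, IsPath src tgt s t L ∧ ∀ e ∈ L, c < Z e := by
  classical
  by_contra hno
  push Not at hno
  have hst : s ≠ t := by
    rintro rfl
    have : flowValue src s Z = 0 := sum_eq_zero fun e _ => if_neg (ht e)
    omega
  have htR : ¬ HeavyReachable src tgt s Z c t := by
    rintro ⟨L, hL, hheavy⟩
    obtain ⟨e, he, hle⟩ := hno L ⟨by rintro rfl; exact hst hL, hL⟩
    exact absurd (hheavy e he) (not_lt.mpr hle)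
  set T := SinkSide src tgt s t Z c
  have hsT : ¬ T s := fun h => h.1 ⟨[], rfl, by simp⟩
  have htT : T t := ⟨htR, [], rfl, by simp⟩
  let C := univ.filter fun e => 0 < Z e ∧ ¬ T (src e) ∧ T (tgt e)
  have hC (e : E) (he : e ∈ C) : 0 < Z e ∧ ¬ T (src e) ∧ T (tgt e) := (mem_filter.mp he).2
  have hvalue : flowValue src s Z ≤ ∑ e ∈ C, Z e := by
    have hcut := flowValue_cut hs hZ (fun v => ¬ T v) (not_not.mpr htT)
    rw [if_pos hsT] at hcut
    calc flowValue src s Z ≤ ∑ e, if ¬ T (src e) ∧ ¬ ¬ T (tgt e) then Z e else 0 := by omega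
      _ ≤ ∑ e, if 0 < Z e ∧ ¬ T (src e) ∧ T (tgt e) then Z e else 0 :=
        sum_le_sum fun e _ => by split_ifs <;> simp_all
      _ = ∑ e ∈ C, Z e := (sum_filter _ _).symm
  have hlight : ∑ e ∈ C, Z e ≤ C.card * c := by
    simpa using sum_le_card_nsmul C Z c fun e he =>
      le_of_enters (hC e he).1 (hC e he).2.1 (hC e he).2.2
  have hcard := card_le_widthIn_support_of_enters hstable hZ hC
  have := Nat.mul_le_mul_right c hcard
  omega

end Bottleneck

theorem mul_flowValue_sub_heaviest_le [Fintype E] [DecidableEq V] [DecidableEq E] {s t : V}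
    (hs : ∀ e, tgt e ≠ s) (ht : ∀ e, src e ≠ t) (hstable : WidthStable src tgt s t)
    (hb : 0 < widthIn src tgt s t Set.univ) {Z : E → ℕ} (hZ : IsFlowN src tgt s t Z)
    {P : List E} {w : ℕ} (hP : IsPath src tgt s t P) (hw : ∀ e ∈ P, w ≤ Z e)
    (hmax : ∀ L w', IsPath src tgt s t L → (∀ e ∈ L, w' ≤ Z e) → w' ≤ w) :
    widthIn src tgt s t Set.univ * flowValue src s (fun e => Z e - if e ∈ P then w else 0)
      ≤ (widthIn src tgt s t Set.univ - 1) * flowValue src s Z := by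
  set b := widthIn src tgt s t Set.univ
  have hM : flowValue src s Z ≤ b * w := by
    by_contra! h
    obtain ⟨L, hL, hlt⟩ := exists_path_lt_of_widthIn_mul_lt hs ht hstable hZ
      ((Nat.mul_le_mul_right w (widthIn_support_le hstable hb hZ)).trans_lt h)
    exact absurd (hmax L (w + 1) hL hlt) (by omega)
  have hind (e : E) : (if e ∈ P then w else 0) ≤ Z e := by
    split_ifs with he
    exacts [hw e he, Nat.zero_le _]
  have hwM : w ≤ flowValue src s Z := flowValue_indicator hs hP w ▸ flowValue_mono hind
  rw [flowValue_sub hind, flowValue_indicator hs hP, Nat.mul_sub, Nat.sub_one_mul]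
  omega

def IsGreedyStep [DecidableEq E] (src tgt : E → V) (s t : V) (Z Z' : E → ℕ) (P : List E)
    (w : ℕ) : Prop :=
  (Z ≠ 0 →
    IsPath src tgt s t P ∧ (∀ e ∈ P, w ≤ Z e) ∧
    (∀ (L : List E) (w' : ℕ), IsPath src tgt s t L → (∀ e ∈ L, w' ≤ Z e) → w' ≤ w) ∧
    (∀ e, Z' e = Z e - (if e ∈ P then w else 0))) ∧
  (Z = 0 → Z' = 0)

namespace IsGreedyStep

variable [Fintype E] [DecidableEq V] [DecidableEq E] {s t : V} {Z Z' : E → ℕ} {P : List E}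
  {w : ℕ}

theorem isFlowN (h : IsGreedyStep src tgt s t Z Z' P w) (hdag : IsDAG src tgt)
    (hZ : IsFlowN src tgt s t Z) : IsFlowN src tgt s t Z' := by
  by_cases hz : Z = 0
  · rw [h.2 hz]
    intro v _ _
    simp
  · obtain ⟨hP, hw, -, hnext⟩ := h.1 hz
    rw [funext hnext]
    exact hZ.sub_path hdag hP.2 hw

theorem mul_flowValue_le (h : IsGreedyStep src tgt s t Z Z' P w) (hs : ∀ e, tgt e ≠ s)
    (ht : ∀ e, src e ≠ t) (hstable : WidthStable src tgt s t)
    (hb : 0 < widthIn src tgt s t Set.univ) (hZ : IsFlowN src tgt s t Z) :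
    widthIn src tgt s t Set.univ * flowValue src s Z'
      ≤ (widthIn src tgt s t Set.univ - 1) * flowValue src s Z := by
  by_cases hz : Z = 0
  · simp [h.2 hz, flowValue]
  · obtain ⟨hP, hw, hmax, hnext⟩ := h.1 hz
    rw [funext hnext]
    exact mul_flowValue_sub_heaviest_le hs ht hstable hb hZ hP hw hmax

end IsGreedyStep

theorem pow_mul_le_pow_mul_of_forall {R : Type*} [CommSemiring R] [PartialOrder R]
    [IsOrderedRing R] {a c : R} (ha : 0 ≤ a) (hc : 0 ≤ c) {u : ℕ → R}
    (h : ∀ j, a * u (j + 1) ≤ c * u j) (N : ℕ) : a ^ N * u N ≤ c ^ N * u 0 := by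
  induction N with
  | zero => simp
  | succ N ih =>
    calc a ^ (N + 1) * u (N + 1) = a ^ N * (a * u (N + 1)) := by ring
      _ ≤ a ^ N * (c * u N) := mul_le_mul_of_nonneg_left (h N) (pow_nonneg ha N)
      _ = c * (a ^ N * u N) := by ring
      _ ≤ c * (c ^ N * u 0) := mul_le_mul_of_nonneg_left ih hc
      _ = c ^ (N + 1) * u 0 := by ring

theorem le_floor_log_div_log_of_pow_le {r M : ℝ} {N : ℕ} (hr : 1 < r) (h : r ^ N ≤ M) :
    N ≤ ⌊Real.log M / Real.log r⌋₊ := by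
  refine Nat.le_floor ((le_div_iff₀ (Real.log_pos hr)).mpr ?_)
  rw [← Real.log_pow]
  exact Real.log_le_log (by positivity) h

theorem le_floor_log_div_log_of_pow_le_pow_mul {b M N : ℕ} (hb : 2 ≤ b)
    (h : b ^ N ≤ (b - 1) ^ N * M) :
    N ≤ ⌊Real.log M / Real.log ((b : ℝ) / ((b : ℝ) - 1))⌋₊ := by
  have hb1 : (0 : ℝ) < b - 1 := by
    have : (2 : ℝ) ≤ b := by exact_mod_cast hb
    linarith
  refine le_floor_log_div_log_of_pow_le ((one_lt_div hb1).mpr (by linarith)) ?_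
  rw [div_pow, div_le_iff₀ (pow_pos hb1 N)]
  have := Nat.cast_le (α := ℝ).mpr h
  push_cast [Nat.cast_sub (by omega : 1 ≤ b)] at this
  linarith

end GreedyWeight

/-- On a width-stable `s`-`t` DAG of width `b ≥ 2`, any run of the greedy-weight
algorithm (repeatedly subtracting a heaviest `s`-`t` path with its maximum carryable
weight) reaches the zero flow after at most `⌊log |X| / log (b/(b-1))⌋ + 1` steps. -/
theorem stmt_6 {V E : Type} [Fintype E] [DecidableEq V] [DecidableEq E]
    (src tgt : E → V) (s t : V)
    (hdag : IsDAG src tgt) (hs : ∀ e, tgt e ≠ s) (ht : ∀ e, src e ≠ t)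
    (hstable : WidthStable src tgt s t)
    (hb : 2 ≤ widthIn src tgt s t Set.univ)
    (X : E → ℕ) (hflow : IsFlowN src tgt s t X)
    (seq : ℕ → E → ℕ) (P : ℕ → List E) (w : ℕ → ℕ)
    (h0 : seq 0 = X)
    (hstep : ∀ j,
      (seq j ≠ 0 →
        IsPath src tgt s t (P j) ∧
        (∀ e ∈ P j, w j ≤ seq j e) ∧
        (∀ (L : List E) (w' : ℕ), IsPath src tgt s t L → (∀ e ∈ L, w' ≤ seq j e) →
          w' ≤ w j) ∧
        (∀ e, seq (j + 1) e = seq j e - (if e ∈ P j then w j else 0))) ∧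
      (seq j = 0 → seq (j + 1) = 0)) :
    seq (Nat.floor (Real.log (flowValue src s X) /
          Real.log ((widthIn src tgt s t Set.univ : ℝ) /
            ((widthIn src tgt s t Set.univ : ℝ) - 1))) + 1) = 0 := by
  have hgreedy (j : ℕ) : IsGreedyStep src tgt s t (seq j) (seq (j + 1)) (P j) (w j) := hstep j
  have hflows (j : ℕ) : IsFlowN src tgt s t (seq j) :=
    Nat.rec (h0 ▸ hflow) (fun j ih => (hgreedy j).isFlowN hdag ih) j
  by_contra hN
  have hpow := pow_mul_le_pow_mul_of_forall (Nat.zero_le _) (Nat.zero_le _)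
    (u := fun j => flowValue src s (seq j))
    (fun j => (hgreedy j).mul_flowValue_le hs ht hstable (by omega) (hflows j))
  obtain ⟨e, he⟩ := Function.ne_iff.mp hN
  have hpos := flowValue_pos hdag hs ht (hflows _) he
  have := le_floor_log_div_log_of_pow_le_pow_mul hb
    (h0 ▸ (Nat.le_mul_of_pos_right _ hpos).trans (hpow _))
  omega
end

section
/- Every two-terminal series-parallel directed graph G is width-stable: for any nonnegative flows X ≤ Y on G (componentwise), width(G|_X) ≤ width(G|_Y). -/
open Finset

/-- The set of vertices touched by the edge set `S`. -/
def verts {V E : Type} (src tgt : E → V) (S : Set E) : Set V :=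
  src '' S ∪ tgt '' S

/-- `IsSP src tgt S s t`: the subgraph on the edge set `S` is a two-terminal
series-parallel graph with terminals `s` and `t`, embedded in the ambient graph. -/
inductive IsSP {V E : Type} (src tgt : E → V) : Set E → V → V → Prop
  | edge (e : E) (h : src e ≠ tgt e) : IsSP src tgt {e} (src e) (tgt e)
  | parallel {S₁ S₂ : Set E} {s t : V} :
      IsSP src tgt S₁ s t → IsSP src tgt S₂ s t → Disjoint S₁ S₂ →
      verts src tgt S₁ ∩ verts src tgt S₂ ⊆ {s, t} →
      IsSP src tgt (S₁ ∪ S₂) s t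
  | series {S₁ S₂ : Set E} {s u t : V} :
      IsSP src tgt S₁ s u → IsSP src tgt S₂ u t → Disjoint S₁ S₂ →
      verts src tgt S₁ ∩ verts src tgt S₂ ⊆ {u} →
      IsSP src tgt (S₁ ∪ S₂) s t

section Aux

variable {V E : Type} (src tgt : E → V)

lemma mem_verts_src {S : Set E} {e : E} (he : e ∈ S) : src e ∈ verts src tgt S :=
  Or.inl ⟨e, he, rfl⟩

lemma mem_verts_tgt {S : Set E} {e : E} (he : e ∈ S) : tgt e ∈ verts src tgt S :=
  Or.inr ⟨e, he, rfl⟩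

lemma verts_union (S₁ S₂ : Set E) :
    verts src tgt (S₁ ∪ S₂) = verts src tgt S₁ ∪ verts src tgt S₂ := by
  ext v; simp only [verts, Set.image_union, Set.mem_union]; tauto

variable {src tgt}

lemma IsWalk.append_s8 {a b c : V} {L₁ L₂ : List E} (h₁ : IsWalk src tgt a b L₁)
    (h₂ : IsWalk src tgt b c L₂) : IsWalk src tgt a c (L₁ ++ L₂) := by
  induction L₁ generalizing a with
  | nil => cases h₁; exact h₂
  | cons e L ih => exact ⟨h₁.1, ih h₁.2⟩

lemma IsWalk.split {a b : V} {L₁ L₂ : List E} (h : IsWalk src tgt a b (L₁ ++ L₂)) :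
    ∃ c, IsWalk src tgt a c L₁ ∧ IsWalk src tgt c b L₂ := by
  induction L₁ generalizing a with
  | nil => exact ⟨a, rfl, h⟩
  | cons e L ih =>
    obtain ⟨c, h1, h2⟩ := ih h.2
    exact ⟨c, ⟨h.1, h1⟩, h2⟩

lemma IsWalk.start_mem_verts {S : Set E} {a b : V} {e : E} {L : List E}
    (h : IsWalk src tgt a b (e :: L)) (hS : ∀ f ∈ e :: L, f ∈ S) :
    a ∈ verts src tgt S := by
  rw [← h.1]; exact mem_verts_src src tgt (hS e (by simp))

lemma IsWalk.end_mem_verts {S : Set E} {a b : V} {L : List E}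
    (h : IsWalk src tgt a b L) (hne : L ≠ []) (hS : ∀ f ∈ L, f ∈ S) :
    b ∈ verts src tgt S := by
  induction L generalizing a with
  | nil => simp at hne
  | cons e L ih =>
    rcases L with _ | ⟨f, L⟩
    · cases h.2; exact mem_verts_tgt src tgt (hS e (by simp))
    · exact ih h.2 (by simp) (fun f hf => hS f (by simp [hf]))

/-- Basic structural facts about series-parallel graphs. -/
lemma IsSP.basic {S : Set E} {s t : V} (h : IsSP src tgt S s t) :
    s ≠ t ∧ s ∈ verts src tgt S ∧ t ∈ verts src tgt S ∧
      ∀ e ∈ S, tgt e ≠ s ∧ src e ≠ t := by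
  induction h with
  | edge e h =>
    refine ⟨h, Or.inl ⟨e, rfl, rfl⟩, Or.inr ⟨e, rfl, rfl⟩, ?_⟩
    rintro f rfl
    exact ⟨fun hh => h hh.symm, h⟩
  | @parallel S₁ S₂ s t h₁ h₂ hdis hverts ih₁ ih₂ =>
    obtain ⟨hst, hs₁, ht₁, hE₁⟩ := ih₁
    obtain ⟨-, -, -, hE₂⟩ := ih₂
    refine ⟨hst, by rw [verts_union]; exact Or.inl hs₁, by rw [verts_union]; exact Or.inl ht₁, ?_⟩
    rintro e (he | he)
    · exact hE₁ e he
    · exact hE₂ e he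
  | @series S₁ S₂ s u t h₁ h₂ hdis hverts ih₁ ih₂ =>
    obtain ⟨hsu, hs₁, hu₁, hE₁⟩ := ih₁
    obtain ⟨hut, hu₂, ht₂, hE₂⟩ := ih₂
    have hst : s ≠ t := by
      rintro rfl
      exact hsu (hverts ⟨hs₁, ht₂⟩)
    refine ⟨hst, by rw [verts_union]; exact Or.inl hs₁, by rw [verts_union]; exact Or.inr ht₂, ?_⟩
    rintro e (he | he)
    · refine ⟨(hE₁ e he).1, fun hc => ?_⟩
      have : t ∈ verts src tgt _ := hc ▸ mem_verts_src src tgt he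
      exact hut (hverts ⟨this, ht₂⟩).symm
    · refine ⟨fun hc => ?_, (hE₂ e he).2⟩
      have : s ∈ verts src tgt _ := hc ▸ mem_verts_tgt src tgt he
      exact hsu (hverts ⟨hs₁, this⟩)

end Aux

section Flow

variable {V E : Type} [Fintype E]

open Classical in
noncomputable def inflow (src tgt : E → V) (S : Set E) (v : V) (X : E → ℕ) : ℕ :=
  ∑ e, if e ∈ S ∧ tgt e = v then X e else 0

open Classical in
noncomputable def outflow (src tgt : E → V) (S : Set E) (v : V) (X : E → ℕ) : ℕ :=
  ∑ e, if e ∈ S ∧ src e = v then X e else 0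

def FlowOn (src tgt : E → V) (S : Set E) (s t : V) (X : E → ℕ) : Prop :=
  ∀ v, v ≠ s → v ≠ t → inflow src tgt S v X = outflow src tgt S v X

variable {src tgt : E → V}

open Classical in
lemma inflow_union {S₁ S₂ : Set E} (hdis : Disjoint S₁ S₂) (v : V) (X : E → ℕ) :
    inflow src tgt (S₁ ∪ S₂) v X = inflow src tgt S₁ v X + inflow src tgt S₂ v X := by
  classical
  unfold inflow
  rw [← Finset.sum_add_distrib]
  refine Finset.sum_congr rfl fun e _ => ?_
  by_cases h1 : e ∈ S₁ <;> by_cases h2 : e ∈ S₂ <;> by_cases h3 : tgt e = v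
  · exact absurd h2 (Set.disjoint_left.mp hdis h1)
  · exact absurd h2 (Set.disjoint_left.mp hdis h1)
  all_goals simp [h1, h2, h3]

open Classical in
lemma outflow_union {S₁ S₂ : Set E} (hdis : Disjoint S₁ S₂) (v : V) (X : E → ℕ) :
    outflow src tgt (S₁ ∪ S₂) v X = outflow src tgt S₁ v X + outflow src tgt S₂ v X := by
  classical
  unfold outflow
  rw [← Finset.sum_add_distrib]
  refine Finset.sum_congr rfl fun e _ => ?_
  by_cases h1 : e ∈ S₁ <;> by_cases h2 : e ∈ S₂ <;> by_cases h3 : src e = v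
  · exact absurd h2 (Set.disjoint_left.mp hdis h1)
  · exact absurd h2 (Set.disjoint_left.mp hdis h1)
  all_goals simp [h1, h2, h3]

lemma inflow_eq_zero' {S : Set E} {v : V} (h : ∀ e ∈ S, tgt e ≠ v) (X : E → ℕ) :
    inflow src tgt S v X = 0 := by
  refine Finset.sum_eq_zero fun e _ => ?_
  rw [if_neg]
  rintro ⟨he, hv⟩
  exact h e he hv

lemma outflow_eq_zero' {S : Set E} {v : V} (h : ∀ e ∈ S, src e ≠ v) (X : E → ℕ) :
    outflow src tgt S v X = 0 := by
  refine Finset.sum_eq_zero fun e _ => ?_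
  rw [if_neg]
  rintro ⟨he, hv⟩
  exact h e he hv

lemma inflow_eq_zero {S : Set E} {v : V} (h : v ∉ verts src tgt S) (X : E → ℕ) :
    inflow src tgt S v X = 0 :=
  inflow_eq_zero' (fun e he hv => h (by rw [← hv]; exact mem_verts_tgt src tgt he)) X

lemma outflow_eq_zero {S : Set E} {v : V} (h : v ∉ verts src tgt S) (X : E → ℕ) :
    outflow src tgt S v X = 0 :=
  outflow_eq_zero' (fun e he hv => h (by rw [← hv]; exact mem_verts_src src tgt he)) X

lemma outflow_of_zero {S : Set E} {v : V} {X : E → ℕ} (h : ∀ e ∈ S, X e = 0) :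
    outflow src tgt S v X = 0 := by
  refine Finset.sum_eq_zero fun e _ => ?_
  split_ifs with hc
  · exact h e hc.1
  · rfl

lemma outflow_singleton (e : E) (X : E → ℕ) :
    outflow src tgt {e} (src e) X = X e := by
  classical
  unfold outflow
  rw [Finset.sum_eq_single e]
  · simp
  · intro f _ hf
    rw [if_neg]
    rintro ⟨hf', -⟩
    exact hf hf'
  · simp

lemma inflow_singleton (e : E) (X : E → ℕ) :
    inflow src tgt {e} (tgt e) X = X e := by
  classical
  unfold inflow
  rw [Finset.sum_eq_single e]
  · simp
  · intro f _ hf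
    rw [if_neg]
    rintro ⟨hf', -⟩
    exact hf hf'
  · simp

/-- Generic restriction of a flow on a disjoint union to one part. -/
lemma FlowOn.restrict {S₁ S₂ : Set E} {s t s₁ t₁ : V} {X : E → ℕ}
    (hdis : Disjoint S₁ S₂) (hX : FlowOn src tgt (S₁ ∪ S₂) s t X)
    (hsub : ∀ v ∈ verts src tgt S₁, v ≠ s₁ → v ≠ t₁ →
      v ∉ verts src tgt S₂ ∧ v ≠ s ∧ v ≠ t) :
    FlowOn src tgt S₁ s₁ t₁ X := by
  intro v hvs hvt
  by_cases hv : v ∈ verts src tgt S₁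
  · obtain ⟨hv2, hvs', hvt'⟩ := hsub v hv hvs hvt
    have := hX v hvs' hvt'
    rwa [inflow_union hdis, outflow_union hdis, inflow_eq_zero hv2, outflow_eq_zero hv2,
      add_zero, add_zero] at this
  · rw [inflow_eq_zero hv, outflow_eq_zero hv]

lemma FlowOn.restrict_par_left {S₁ S₂ : Set E} {s t : V} {X : E → ℕ}
    (hdis : Disjoint S₁ S₂)
    (hverts : verts src tgt S₁ ∩ verts src tgt S₂ ⊆ {s, t})
    (hX : FlowOn src tgt (S₁ ∪ S₂) s t X) :
    FlowOn src tgt S₁ s t X := by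
  refine hX.restrict hdis fun v hv hvs hvt => ⟨fun h2 => ?_, hvs, hvt⟩
  rcases hverts ⟨hv, h2⟩ with h | h
  · exact hvs h
  · exact hvt h

lemma FlowOn.restrict_par_right {S₁ S₂ : Set E} {s t : V} {X : E → ℕ}
    (hdis : Disjoint S₁ S₂)
    (hverts : verts src tgt S₁ ∩ verts src tgt S₂ ⊆ {s, t})
    (hX : FlowOn src tgt (S₁ ∪ S₂) s t X) :
    FlowOn src tgt S₂ s t X := by
  rw [Set.union_comm] at hX
  exact hX.restrict_par_left hdis.symm (by rwa [Set.inter_comm]) 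

lemma FlowOn.restrict_ser_left {S₁ S₂ : Set E} {s u t : V} {X : E → ℕ}
    (h₂ : IsSP src tgt S₂ u t) (hdis : Disjoint S₁ S₂)
    (hverts : verts src tgt S₁ ∩ verts src tgt S₂ ⊆ {u})
    (hX : FlowOn src tgt (S₁ ∪ S₂) s t X) :
    FlowOn src tgt S₁ s u X := by
  obtain ⟨-, -, ht₂, -⟩ := h₂.basic
  refine hX.restrict hdis fun v hv hvs hvu => ⟨fun hc => hvu (hverts ⟨hv, hc⟩), hvs, fun hc => ?_⟩
  exact hvu (hverts ⟨hv, hc ▸ ht₂⟩)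

lemma FlowOn.restrict_ser_right {S₁ S₂ : Set E} {s u t : V} {X : E → ℕ}
    (h₁ : IsSP src tgt S₁ s u) (hdis : Disjoint S₁ S₂)
    (hverts : verts src tgt S₁ ∩ verts src tgt S₂ ⊆ {u})
    (hX : FlowOn src tgt (S₁ ∪ S₂) s t X) :
    FlowOn src tgt S₂ u t X := by
  obtain ⟨-, hs₁, -, -⟩ := h₁.basic
  rw [Set.union_comm] at hX
  refine hX.restrict hdis.symm fun v hv hvu hvt =>
    ⟨fun hc => hvu (hverts ⟨hc, hv⟩), fun hc => hvu (hverts ⟨hc ▸ hs₁, hv⟩), hvt⟩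

/-- The value of a flow: outflow at the source equals inflow at the sink. -/
lemma IsSP.flow_value {S : Set E} {s t : V} (h : IsSP src tgt S s t) :
    ∀ X : E → ℕ, FlowOn src tgt S s t X →
      outflow src tgt S s X = inflow src tgt S t X := by
  induction h with
  | edge e h => intro X _; rw [outflow_singleton, inflow_singleton]
  | @parallel S₁ S₂ s t h₁ h₂ hdis hverts ih₁ ih₂ =>
    intro X hX
    rw [outflow_union hdis, inflow_union hdis,
      ih₁ X (hX.restrict_par_left hdis hverts), ih₂ X (hX.restrict_par_right hdis hverts)]
  | @series S₁ S₂ s u t h₁ h₂ hdis hverts ih₁ ih₂ =>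
    intro X hX
    obtain ⟨hsu, hs₁, hu₁, hE₁⟩ := h₁.basic
    obtain ⟨hut, hu₂, ht₂, hE₂⟩ := h₂.basic
    have hs2 : s ∉ verts src tgt S₂ := fun hc => hsu (hverts ⟨hs₁, hc⟩)
    have ht1 : t ∉ verts src tgt S₁ := fun hc => hut (hverts ⟨hc, ht₂⟩).symm
    have hF₁ := hX.restrict_ser_left h₂ hdis hverts
    have hF₂ := hX.restrict_ser_right h₁ hdis hverts
    have hcons := hX u (fun hc => hsu hc.symm) hut
    rw [inflow_union hdis, outflow_union hdis,
      inflow_eq_zero' (fun e he => (hE₂ e he).1) X,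
      outflow_eq_zero' (fun e he => (hE₁ e he).2) X, add_zero, zero_add] at hcons
    rw [outflow_union hdis, inflow_union hdis, outflow_eq_zero hs2, inflow_eq_zero ht1,
      add_zero, zero_add, ih₁ X hF₁, hcons, ih₂ X hF₂]

/-- In a series composition, the value passing through `S₁` equals that through `S₂`. -/
lemma series_mid {S₁ S₂ : Set E} {s u t : V} {X : E → ℕ}
    (h₁ : IsSP src tgt S₁ s u) (h₂ : IsSP src tgt S₂ u t) (hdis : Disjoint S₁ S₂)
    (hverts : verts src tgt S₁ ∩ verts src tgt S₂ ⊆ {u})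
    (hX : FlowOn src tgt (S₁ ∪ S₂) s t X) :
    outflow src tgt S₁ s X = outflow src tgt S₂ u X := by
  obtain ⟨hsu, hs₁, hu₁, hE₁⟩ := h₁.basic
  obtain ⟨hut, hu₂, ht₂, hE₂⟩ := h₂.basic
  have hcons := hX u (fun hc => hsu hc.symm) hut
  rw [inflow_union hdis, outflow_union hdis,
    inflow_eq_zero' (fun e he => (hE₂ e he).1) X,
    outflow_eq_zero' (fun e he => (hE₁ e he).2) X, add_zero, zero_add] at hcons
  rw [h₁.flow_value X (hX.restrict_ser_left h₂ hdis hverts), hcons]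

/-- A flow of value zero on a series-parallel graph vanishes. -/
lemma IsSP.flow_zero {S : Set E} {s t : V} (h : IsSP src tgt S s t) :
    ∀ X : E → ℕ, FlowOn src tgt S s t X → outflow src tgt S s X = 0 →
      ∀ e ∈ S, X e = 0 := by
  induction h with
  | edge e h =>
    intro X _ h0 f hf
    rw [Set.mem_singleton_iff] at hf
    subst hf
    rwa [outflow_singleton] at h0
  | @parallel S₁ S₂ s t h₁ h₂ hdis hverts ih₁ ih₂ =>
    intro X hX h0 e he
    rw [outflow_union hdis, Nat.add_eq_zero] at h0
    rcases he with he | he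
    · exact ih₁ X (hX.restrict_par_left hdis hverts) h0.1 e he
    · exact ih₂ X (hX.restrict_par_right hdis hverts) h0.2 e he
  | @series S₁ S₂ s u t h₁ h₂ hdis hverts ih₁ ih₂ =>
    intro X hX h0 e he
    obtain ⟨hsu, hs₁, hu₁, hE₁⟩ := h₁.basic
    have hs2 : s ∉ verts src tgt S₂ := fun hc => hsu (hverts ⟨hs₁, hc⟩)
    rw [outflow_union hdis, outflow_eq_zero hs2, add_zero] at h0
    have hmid := series_mid h₁ h₂ hdis hverts hX
    rcases he with he | he
    · exact ih₁ X (hX.restrict_ser_left h₂ hdis hverts) h0 e he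
    · exact ih₂ X (hX.restrict_ser_right h₁ hdis hverts) (by rw [← hmid, h0]) e he

end Flow

section Width

variable {V E : Type} [Fintype E] (src tgt : E → V)

def widthSet (s t : V) (S : Set E) : Set ℕ :=
  {k | ∃ P : Fin k → List E,
    (∀ i, IsPath src tgt s t (P i) ∧ ∀ e ∈ P i, e ∈ S) ∧ ∀ e ∈ S, ∃ i, e ∈ P i}

lemma widthIn_eq (s t : V) (S : Set E) :
    widthIn src tgt s t S = sInf (widthSet src tgt s t S) := rfl

variable {src tgt}

lemma widthIn_le {s t : V} {S : Set E} {k : ℕ} (h : k ∈ widthSet src tgt s t S) :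
    widthIn src tgt s t S ≤ k := Nat.sInf_le h

lemma zero_mem_widthSet {s t : V} {S : Set E} (hS : S = ∅) :
    0 ∈ widthSet src tgt s t S := by
  refine ⟨Fin.elim0, fun i => i.elim0, fun e he => ?_⟩
  rw [hS] at he
  exact absurd he (Set.notMem_empty e)

lemma widthIn_empty {s t : V} {S : Set E} (hS : S = ∅) :
    widthIn src tgt s t S = 0 :=
  Nat.le_zero.mp (widthIn_le (zero_mem_widthSet hS))

lemma widthSet_pos {s t : V} {S : Set E} {k : ℕ} (hS : S.Nonempty)
    (hk : k ∈ widthSet src tgt s t S) : 1 ≤ k := by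
  obtain ⟨P, -, hcov⟩ := hk
  obtain ⟨e, he⟩ := hS
  obtain ⟨i, -⟩ := hcov e he
  exact i.pos

/-- Combining covers for a parallel composition. -/
lemma widthSet_parallel_combine {s t : V} {T₁ T₂ : Set E} {k₁ k₂ : ℕ}
    (h1 : k₁ ∈ widthSet src tgt s t T₁) (h2 : k₂ ∈ widthSet src tgt s t T₂) :
    k₁ + k₂ ∈ widthSet src tgt s t (T₁ ∪ T₂) := by
  obtain ⟨P₁, hP₁, hcov₁⟩ := h1
  obtain ⟨P₂, hP₂, hcov₂⟩ := h2
  refine ⟨Fin.addCases P₁ P₂, fun i => ?_, fun e he => ?_⟩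
  · refine Fin.addCases (fun i => ?_) (fun j => ?_) i
    · simp only [Fin.addCases_left]
      exact ⟨(hP₁ i).1, fun e he => Or.inl ((hP₁ i).2 e he)⟩
    · simp only [Fin.addCases_right]
      exact ⟨(hP₂ j).1, fun e he => Or.inr ((hP₂ j).2 e he)⟩
  · rcases he with he | he
    · obtain ⟨i, hi⟩ := hcov₁ e he
      exact ⟨Fin.castAdd k₂ i, by simpa only [Fin.addCases_left] using hi⟩
    · obtain ⟨j, hj⟩ := hcov₂ e he
      exact ⟨Fin.natAdd k₁ j, by simpa only [Fin.addCases_right] using hj⟩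

/-- Combining covers for a series composition. -/
lemma widthSet_series_combine {s u t : V} {T₁ T₂ : Set E} {k₁ k₂ : ℕ}
    (h1 : k₁ ∈ widthSet src tgt s u T₁) (h2 : k₂ ∈ widthSet src tgt u t T₂)
    (hk1 : 1 ≤ k₁) (hk2 : 1 ≤ k₂) :
    max k₁ k₂ ∈ widthSet src tgt s t (T₁ ∪ T₂) := by
  obtain ⟨P₁, hP₁, hcov₁⟩ := h1
  obtain ⟨P₂, hP₂, hcov₂⟩ := h2
  refine ⟨fun i => P₁ ⟨min i (k₁ - 1), by omega⟩ ++ P₂ ⟨min i (k₂ - 1), by omega⟩,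
    fun i => ?_, fun e he => ?_⟩
  · set i₁ : Fin k₁ := ⟨min i (k₁ - 1), by omega⟩
    set i₂ : Fin k₂ := ⟨min i (k₂ - 1), by omega⟩
    refine ⟨⟨?_, (hP₁ i₁).1.2.append_s8 (hP₂ i₂).1.2⟩, ?_⟩
    · intro hc
      rw [List.append_eq_nil_iff] at hc
      exact (hP₁ i₁).1.1 hc.1
    · intro e he
      rcases List.mem_append.mp he with h | h
      · exact Or.inl ((hP₁ i₁).2 e h)
      · exact Or.inr ((hP₂ i₂).2 e h)
  · rcases he with he | he
    · obtain ⟨i, hi⟩ := hcov₁ e he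
      refine ⟨⟨i, by omega⟩, List.mem_append.mpr (Or.inl ?_)⟩
      have : (⟨min (↑(⟨(i : ℕ), by omega⟩ : Fin (max k₁ k₂))) (k₁ - 1), by omega⟩ : Fin k₁) = i := by
        ext; simp only []; omega
      rwa [this]
    · obtain ⟨j, hj⟩ := hcov₂ e he
      refine ⟨⟨j, by omega⟩, List.mem_append.mpr (Or.inr ?_)⟩
      have : (⟨min (↑(⟨(j : ℕ), by omega⟩ : Fin (max k₁ k₂))) (k₂ - 1), by omega⟩ : Fin k₂) = j := by
        ext; simp only []; omega
      rwa [this]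

end Width

section Split

variable {V E : Type} {src tgt : E → V}

/-- In a parallel composition, every walk stays within one side. -/
lemma walk_side {S₁ S₂ : Set E} {s t : V}
    (h₁ : IsSP src tgt S₁ s t) (h₂ : IsSP src tgt S₂ s t)
    (hverts : verts src tgt S₁ ∩ verts src tgt S₂ ⊆ {s, t}) :
    ∀ {L : List E} {a b : V}, IsWalk src tgt a b L → (∀ f ∈ L, f ∈ S₁ ∪ S₂) →
      (∀ f ∈ L, f ∈ S₁) ∨ (∀ f ∈ L, f ∈ S₂) := by
  obtain ⟨-, -, -, hE₁⟩ := h₁.basic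
  obtain ⟨-, -, -, hE₂⟩ := h₂.basic
  intro L
  induction L with
  | nil => intro a b _ _; left; simp
  | cons e L ih =>
    intro a b hw hL
    have key : ∀ f, src f = tgt e → ¬(e ∈ S₁ ∧ f ∈ S₂) ∧ ¬(e ∈ S₂ ∧ f ∈ S₁) := by
      intro f hf
      constructor
      · rintro ⟨he1, hf2⟩
        have hv : tgt e ∈ verts src tgt S₁ ∩ verts src tgt S₂ :=
          ⟨mem_verts_tgt src tgt he1, hf ▸ mem_verts_src src tgt hf2⟩
        rcases hverts hv with h | h
        · exact (hE₁ e he1).1 h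
        · exact (hE₂ f hf2).2 (hf.symm ▸ h)
      · rintro ⟨he2, hf1⟩
        have hv : tgt e ∈ verts src tgt S₁ ∩ verts src tgt S₂ :=
          ⟨hf ▸ mem_verts_src src tgt hf1, mem_verts_tgt src tgt he2⟩
        rcases hverts hv with h | h
        · exact (hE₂ e he2).1 h
        · exact (hE₁ f hf1).2 (hf.symm ▸ h)
    rcases ih hw.2 (fun f hf => hL f (by simp [hf])) with hall | hall
    · rcases hL e (by simp) with he | he
      · left; intro f hf
        rcases List.mem_cons.mp hf with rfl | hf
        · exact he
        · exact hall f hf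
      · -- e ∈ S₂, tail all in S₁ : tail must be empty
        rcases L with _ | ⟨f, L'⟩
        · right; intro f hf
          rcases List.mem_cons.mp hf with rfl | hf
          · exact he
          · simp at hf
        · exact absurd ⟨he, hall f (by simp)⟩ (key f hw.2.1).2
    · rcases hL e (by simp) with he | he
      · rcases L with _ | ⟨f, L'⟩
        · left; intro f hf
          rcases List.mem_cons.mp hf with rfl | hf
          · exact he
          · simp at hf
        · exact absurd ⟨he, hall f (by simp)⟩ (key f hw.2.1).1
      · right; intro f hf
        rcases List.mem_cons.mp hf with rfl | hf
        · exact he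
        · exact hall f hf

/-- In a series composition, every walk splits as a prefix in `S₁` and a suffix in `S₂`. -/
lemma walk_series_split_aux {S₁ S₂ : Set E} {s u t : V}
    (h₁ : IsSP src tgt S₁ s u) (h₂ : IsSP src tgt S₂ u t)
    (hverts : verts src tgt S₁ ∩ verts src tgt S₂ ⊆ {u}) :
    ∀ {L : List E} {a b : V}, IsWalk src tgt a b L → (∀ f ∈ L, f ∈ S₁ ∪ S₂) →
      ∃ L₁ L₂, L = L₁ ++ L₂ ∧ (∀ f ∈ L₁, f ∈ S₁) ∧ (∀ f ∈ L₂, f ∈ S₂) := by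
  obtain ⟨-, -, -, hE₂⟩ := h₂.basic
  intro L
  induction L with
  | nil => intro a b _ _; exact ⟨[], [], rfl, by simp, by simp⟩
  | cons e L ih =>
    intro a b hw hL
    obtain ⟨L₁, L₂, hsplit, hL₁, hL₂⟩ := ih hw.2 (fun f hf => hL f (by simp [hf]))
    rcases hL e (by simp) with he | he
    · exact ⟨e :: L₁, L₂, by rw [hsplit]; rfl, by
        intro f hf
        rcases List.mem_cons.mp hf with rfl | hf
        · exact he
        · exact hL₁ f hf, hL₂⟩
    · -- e ∈ S₂ : show L₁ = []
      rcases L₁ with _ | ⟨f, L₁'⟩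
      · refine ⟨[], e :: L₂, by rw [hsplit]; rfl, by simp, ?_⟩
        intro g hg
        rcases List.mem_cons.mp hg with rfl | hg
        · exact he
        · exact hL₂ g hg
      · exfalso
        have hf1 : f ∈ S₁ := hL₁ f (by simp)
        have hadj : src f = tgt e := by
          rw [hsplit] at hw
          exact hw.2.1
        have hv : tgt e ∈ verts src tgt S₁ ∩ verts src tgt S₂ :=
          ⟨hadj ▸ mem_verts_src src tgt hf1, mem_verts_tgt src tgt he⟩
        exact (hE₂ e he).1 (hverts hv)

/-- Full series splitting with endpoints. -/
lemma walk_series_split {S₁ S₂ : Set E} {s u t : V}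
    (h₁ : IsSP src tgt S₁ s u) (h₂ : IsSP src tgt S₂ u t)
    (hverts : verts src tgt S₁ ∩ verts src tgt S₂ ⊆ {u})
    {L : List E} (hw : IsWalk src tgt s t L) (hne : L ≠ [])
    (hL : ∀ f ∈ L, f ∈ S₁ ∪ S₂) :
    ∃ L₁ L₂, L = L₁ ++ L₂ ∧ IsPath src tgt s u L₁ ∧ IsPath src tgt u t L₂ ∧
      (∀ f ∈ L₁, f ∈ S₁) ∧ (∀ f ∈ L₂, f ∈ S₂) := by
  obtain ⟨hsu, hs₁, hu₁, -⟩ := h₁.basic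
  obtain ⟨hut, hu₂, ht₂, -⟩ := h₂.basic
  obtain ⟨L₁, L₂, hsplit, hL₁, hL₂⟩ := walk_series_split_aux h₁ h₂ hverts hw hL
  subst hsplit
  obtain ⟨c, hw₁, hw₂⟩ := hw.split
  have hne₁ : L₁ ≠ [] := by
    rintro rfl
    cases hw₁
    rcases L₂ with _ | ⟨f, L'⟩
    · simp at hne
    · exact hsu (hverts ⟨hs₁, hw₂.start_mem_verts hL₂⟩)
  have hne₂ : L₂ ≠ [] := by
    rintro rfl
    cases hw₂
    exact hut (hverts ⟨hw₁.end_mem_verts hne₁ hL₁, ht₂⟩).symm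
  have hcu : c = u := by
    apply hverts
    constructor
    · exact hw₁.end_mem_verts hne₁ hL₁
    · rcases L₂ with _ | ⟨f, L'⟩
      · simp at hne₂
      · exact hw₂.start_mem_verts hL₂
  subst hcu
  exact ⟨L₁, L₂, rfl, ⟨hne₁, hw₁⟩, ⟨hne₂, hw₂⟩, hL₁, hL₂⟩

end Split

section Cover

variable {V E : Type} [Fintype E] {src tgt : E → V}

/-- The support of a flow on a series-parallel graph can be covered by paths. -/
lemma IsSP.cover {S : Set E} {s t : V} (h : IsSP src tgt S s t) :
    ∀ X : E → ℕ, FlowOn src tgt S s t X →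
      (widthSet src tgt s t (S ∩ {e | X e ≠ 0})).Nonempty := by
  induction h with
  | edge e h =>
    intro X _
    by_cases hX : X e = 0
    · refine ⟨0, zero_mem_widthSet ?_⟩
      ext f
      simp only [Set.mem_inter_iff, Set.mem_singleton_iff, Set.mem_setOf_eq,
        Set.mem_empty_iff_false, iff_false, not_and]
      rintro rfl hf
      exact hf hX
    · refine ⟨1, fun _ => [e], fun i => ⟨⟨by simp, rfl, rfl⟩, ?_⟩, fun f hf => ⟨0, ?_⟩⟩
      · intro f hf
        simp only [List.mem_singleton] at hf
        subst hf
        exact ⟨rfl, hX⟩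
      · obtain ⟨hf1, -⟩ := hf
        rw [Set.mem_singleton_iff] at hf1
        subst hf1
        simp
  | @parallel S₁ S₂ s t h₁ h₂ hdis hverts ih₁ ih₂ =>
    intro X hX
    obtain ⟨k₁, hk₁⟩ := ih₁ X (hX.restrict_par_left hdis hverts)
    obtain ⟨k₂, hk₂⟩ := ih₂ X (hX.restrict_par_right hdis hverts)
    rw [Set.union_inter_distrib_right]
    exact ⟨k₁ + k₂, widthSet_parallel_combine hk₁ hk₂⟩
  | @series S₁ S₂ s u t h₁ h₂ hdis hverts ih₁ ih₂ =>
    intro X hX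
    have hX₁ := hX.restrict_ser_left h₂ hdis hverts
    have hX₂ := hX.restrict_ser_right h₁ hdis hverts
    rw [Set.union_inter_distrib_right]
    by_cases hz : ∀ e ∈ S₁, X e = 0
    · have hz₂ : ∀ e ∈ S₂, X e = 0 := by
        refine h₂.flow_zero X hX₂ ?_
        rw [← series_mid h₁ h₂ hdis hverts hX]
        exact outflow_of_zero hz
      refine ⟨0, zero_mem_widthSet ?_⟩
      ext f
      simp only [Set.mem_union, Set.mem_inter_iff, Set.mem_setOf_eq, Set.mem_empty_iff_false,
        iff_false, not_or, not_and]
      exact ⟨fun hf hc => hc (hz f hf), fun hf hc => hc (hz₂ f hf)⟩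
    · push_neg at hz
      obtain ⟨e₀, he₀, hXe₀⟩ := hz
      have hne₁ : (S₁ ∩ {e | X e ≠ 0}).Nonempty := ⟨e₀, he₀, hXe₀⟩
      have hne₂ : (S₂ ∩ {e | X e ≠ 0}).Nonempty := by
        by_contra hc
        rw [Set.not_nonempty_iff_eq_empty] at hc
        rw [Set.eq_empty_iff_forall_notMem] at hc
        have hz₂ : ∀ e ∈ S₂, X e = 0 := by
          intro e he
          by_contra hXe
          exact hc e ⟨he, hXe⟩
        refine hXe₀ (h₁.flow_zero X hX₁ ?_ e₀ he₀)
        rw [series_mid h₁ h₂ hdis hverts hX]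
        exact outflow_of_zero hz₂
      obtain ⟨k₁, hk₁⟩ := ih₁ X hX₁
      obtain ⟨k₂, hk₂⟩ := ih₂ X hX₂
      exact ⟨max k₁ k₂, widthSet_series_combine hk₁ hk₂
        (widthSet_pos hne₁ hk₁) (widthSet_pos hne₂ hk₂)⟩

/-- Covering a set by the paths indexed by a finset gives a width bound. -/
lemma widthIn_le_card {s t : V} {B : Set E} {k : ℕ} (P : Fin k → List E) (I : Finset (Fin k))
    (hpath : ∀ i ∈ I, IsPath src tgt s t (P i) ∧ ∀ f ∈ P i, f ∈ B)
    (hcov : ∀ e ∈ B, ∃ i ∈ I, e ∈ P i) : widthIn src tgt s t B ≤ I.card := by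
  set σ := I.orderIsoOfFin rfl with hσ
  refine widthIn_le ⟨fun j => P ((σ j : {x // x ∈ I}) : Fin k),
    fun j => hpath _ (σ j).2, fun e he => ?_⟩
  obtain ⟨i, hiI, hi⟩ := hcov e he
  refine ⟨σ.symm ⟨i, hiI⟩, ?_⟩
  show e ∈ P ((σ (σ.symm ⟨i, hiI⟩) : {x // x ∈ I}) : Fin k)
  rw [OrderIso.apply_symm_apply]
  exact hi

/-- Lower bound for parallel composition: any cover of the union splits. -/
lemma width_parallel_ge {S₁ S₂ B₁ B₂ : Set E} {s t : V} {k : ℕ}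
    (h₁ : IsSP src tgt S₁ s t) (h₂ : IsSP src tgt S₂ s t) (hdis : Disjoint S₁ S₂)
    (hverts : verts src tgt S₁ ∩ verts src tgt S₂ ⊆ {s, t})
    (hB₁ : B₁ ⊆ S₁) (hB₂ : B₂ ⊆ S₂)
    (hk : k ∈ widthSet src tgt s t (B₁ ∪ B₂)) :
    widthIn src tgt s t B₁ + widthIn src tgt s t B₂ ≤ k := by
  classical
  obtain ⟨P, hP, hcov⟩ := hk
  set I : Finset (Fin k) := Finset.univ.filter (fun i => ∀ f ∈ P i, f ∈ S₁) with hI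
  have hImem : ∀ i, i ∈ I ↔ ∀ f ∈ P i, f ∈ S₁ := by
    intro i
    rw [hI, Finset.mem_filter]
    simp
  have hside : ∀ i, (∀ f ∈ P i, f ∈ S₁) ∨ (∀ f ∈ P i, f ∈ S₂) := fun i =>
    walk_side h₁ h₂ hverts (hP i).1.2
      (fun f hf => by rcases (hP i).2 f hf with h | h
                      exacts [Or.inl (hB₁ h), Or.inr (hB₂ h)])
  have key₁ : widthIn src tgt s t B₁ ≤ I.card := by
    refine widthIn_le_card P I (fun i hi => ⟨(hP i).1, fun f hf => ?_⟩) (fun e he => ?_)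
    · rcases (hP i).2 f hf with h | h
      · exact h
      · exact absurd ((hImem i).mp hi f hf) (Set.disjoint_right.mp hdis (hB₂ h))
    · obtain ⟨i, hi⟩ := hcov e (Or.inl he)
      refine ⟨i, (hImem i).mpr ?_, hi⟩
      rcases hside i with h | h
      · exact h
      · exact absurd (h e hi) (Set.disjoint_left.mp hdis (hB₁ he))
  have key₂ : widthIn src tgt s t B₂ ≤ Iᶜ.card := by
    refine widthIn_le_card P Iᶜ (fun i hi => ⟨(hP i).1, fun f hf => ?_⟩) (fun e he => ?_)
    · rw [Finset.mem_compl] at hi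
      have hall : ∀ g ∈ P i, g ∈ S₂ := by
        rcases hside i with h | h
        · exact absurd ((hImem i).mpr h) hi
        · exact h
      rcases (hP i).2 f hf with h | h
      · exact absurd (hB₁ h) (Set.disjoint_right.mp hdis (hall f hf))
      · exact h
    · obtain ⟨i, hi⟩ := hcov e (Or.inr he)
      refine ⟨i, ?_, hi⟩
      rw [Finset.mem_compl]
      intro hiI
      exact absurd ((hImem i).mp hiI e hi) (Set.disjoint_right.mp hdis (hB₂ he))
  calc widthIn src tgt s t B₁ + widthIn src tgt s t B₂ ≤ I.card + Iᶜ.card :=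
        Nat.add_le_add key₁ key₂
    _ = k := by rw [Finset.card_add_card_compl, Fintype.card_fin]

/-- Lower bound for series composition. -/
lemma width_series_ge {S₁ S₂ B₁ B₂ : Set E} {s u t : V} {k : ℕ}
    (h₁ : IsSP src tgt S₁ s u) (h₂ : IsSP src tgt S₂ u t) (hdis : Disjoint S₁ S₂)
    (hverts : verts src tgt S₁ ∩ verts src tgt S₂ ⊆ {u})
    (hB₁ : B₁ ⊆ S₁) (hB₂ : B₂ ⊆ S₂)
    (hk : k ∈ widthSet src tgt s t (B₁ ∪ B₂)) :
    widthIn src tgt s u B₁ ≤ k ∧ widthIn src tgt u t B₂ ≤ k := by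
  obtain ⟨P, hP, hcov⟩ := hk
  have hsplit : ∀ i, ∃ L₁ L₂, P i = L₁ ++ L₂ ∧ IsPath src tgt s u L₁ ∧ IsPath src tgt u t L₂ ∧
      (∀ f ∈ L₁, f ∈ S₁) ∧ (∀ f ∈ L₂, f ∈ S₂) := fun i =>
    walk_series_split h₁ h₂ hverts (hP i).1.2 (hP i).1.1
      (fun f hf => by rcases (hP i).2 f hf with h | h
                      exacts [Or.inl (hB₁ h), Or.inr (hB₂ h)])
  choose Q₁ Q₂ heq hpath₁ hpath₂ hin₁ hin₂ using hsplit
  constructor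
  · refine widthIn_le ⟨Q₁, fun i => ⟨hpath₁ i, ?_⟩, fun e he => ?_⟩
    · intro f hf
      rcases (hP i).2 f (by rw [heq i]; exact List.mem_append.mpr (Or.inl hf)) with h | h
      · exact h
      · exact absurd (hin₁ i f hf) (Set.disjoint_right.mp hdis (hB₂ h))
    · obtain ⟨i, hi⟩ := hcov e (Or.inl he)
      rw [heq i] at hi
      rcases List.mem_append.mp hi with h | h
      · exact ⟨i, h⟩
      · exact absurd (hin₂ i e h) (Set.disjoint_left.mp hdis (hB₁ he))
  · refine widthIn_le ⟨Q₂, fun i => ⟨hpath₂ i, ?_⟩, fun e he => ?_⟩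
    · intro f hf
      rcases (hP i).2 f (by rw [heq i]; exact List.mem_append.mpr (Or.inr hf)) with h | h
      · exact absurd (hin₂ i f hf) (Set.disjoint_left.mp hdis (hB₁ h))
      · exact h
    · obtain ⟨i, hi⟩ := hcov e (Or.inr he)
      rw [heq i] at hi
      rcases List.mem_append.mp hi with h | h
      · exact absurd (hin₁ i e h) (Set.disjoint_right.mp hdis (hB₂ he))
      · exact ⟨i, h⟩

end Cover

section Main

variable {V E : Type} [Fintype E] {src tgt : E → V}

/-- Width-stability for series-parallel graphs, relative form. -/
lemma IsSP.width_mono {S : Set E} {s t : V} (h : IsSP src tgt S s t) :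
    ∀ X Y : E → ℕ, FlowOn src tgt S s t X → FlowOn src tgt S s t Y →
      (∀ e, X e ≤ Y e) →
      widthIn src tgt s t (S ∩ {e | X e ≠ 0}) ≤ widthIn src tgt s t (S ∩ {e | Y e ≠ 0}) := by
  induction h with
  | edge e h =>
    intro X Y _ _ hXY
    by_cases hX : X e = 0
    · rw [widthIn_empty (by
        ext f
        simp only [Set.mem_inter_iff, Set.mem_singleton_iff, Set.mem_setOf_eq,
          Set.mem_empty_iff_false, iff_false, not_and]
        rintro rfl hf
        exact hf hX)]
      exact Nat.zero_le _
    · have hY : Y e ≠ 0 := fun hc => hX (Nat.le_zero.mp (hc ▸ hXY e))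
      have hset : ({e} : Set E) ∩ {f | X f ≠ 0} = {e} ∩ {f | Y f ≠ 0} := by
        ext f
        simp only [Set.mem_inter_iff, Set.mem_singleton_iff, Set.mem_setOf_eq]
        constructor <;> rintro ⟨rfl, -⟩
        · exact ⟨rfl, hY⟩
        · exact ⟨rfl, hX⟩
      rw [hset]
  | @parallel S₁ S₂ s t h₁ h₂ hdis hverts ih₁ ih₂ =>
    intro X Y hX hY hXY
    have hX₁ := hX.restrict_par_left hdis hverts
    have hX₂ := hX.restrict_par_right hdis hverts
    have hY₁ := hY.restrict_par_left hdis hverts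
    have hY₂ := hY.restrict_par_right hdis hverts
    rw [Set.union_inter_distrib_right, Set.union_inter_distrib_right]
    have c₁ := Nat.sInf_mem (h₁.cover X hX₁)
    have c₂ := Nat.sInf_mem (h₂.cover X hX₂)
    rw [← widthIn_eq] at c₁ c₂
    calc widthIn src tgt s t (S₁ ∩ {e | X e ≠ 0} ∪ S₂ ∩ {e | X e ≠ 0})
        ≤ widthIn src tgt s t (S₁ ∩ {e | X e ≠ 0}) + widthIn src tgt s t (S₂ ∩ {e | X e ≠ 0}) :=
          widthIn_le (widthSet_parallel_combine c₁ c₂)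
      _ ≤ widthIn src tgt s t (S₁ ∩ {e | Y e ≠ 0}) + widthIn src tgt s t (S₂ ∩ {e | Y e ≠ 0}) :=
          Nat.add_le_add (ih₁ X Y hX₁ hY₁ hXY) (ih₂ X Y hX₂ hY₂ hXY)
      _ ≤ widthIn src tgt s t (S₁ ∩ {e | Y e ≠ 0} ∪ S₂ ∩ {e | Y e ≠ 0}) := by
          refine width_parallel_ge h₁ h₂ hdis hverts Set.inter_subset_left
            Set.inter_subset_left ?_
          have := Nat.sInf_mem ((IsSP.parallel h₁ h₂ hdis hverts).cover Y hY)
          rwa [← widthIn_eq, Set.union_inter_distrib_right] at this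
  | @series S₁ S₂ s u t h₁ h₂ hdis hverts ih₁ ih₂ =>
    intro X Y hX hY hXY
    have hX₁ := hX.restrict_ser_left h₂ hdis hverts
    have hX₂ := hX.restrict_ser_right h₁ hdis hverts
    have hY₁ := hY.restrict_ser_left h₂ hdis hverts
    have hY₂ := hY.restrict_ser_right h₁ hdis hverts
    rw [Set.union_inter_distrib_right, Set.union_inter_distrib_right]
    by_cases hz : ∀ e ∈ S₁, X e = 0
    · have hz₂ : ∀ e ∈ S₂, X e = 0 := by
        refine h₂.flow_zero X hX₂ ?_
        rw [← series_mid h₁ h₂ hdis hverts hX]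
        exact outflow_of_zero hz
      rw [widthIn_empty (by
        ext f
        simp only [Set.mem_union, Set.mem_inter_iff, Set.mem_setOf_eq,
          Set.mem_empty_iff_false, iff_false, not_or, not_and]
        exact ⟨fun hf hc => hc (hz f hf), fun hf hc => hc (hz₂ f hf)⟩)]
      exact Nat.zero_le _
    · push_neg at hz
      obtain ⟨e₀, he₀, hXe₀⟩ := hz
      have hne₁ : (S₁ ∩ {e | X e ≠ 0}).Nonempty := ⟨e₀, he₀, hXe₀⟩
      have hne₂ : (S₂ ∩ {e | X e ≠ 0}).Nonempty := by
        by_contra hc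
        rw [Set.not_nonempty_iff_eq_empty, Set.eq_empty_iff_forall_notMem] at hc
        have hz₂ : ∀ e ∈ S₂, X e = 0 := by
          intro e he
          by_contra hXe
          exact hc e ⟨he, hXe⟩
        refine hXe₀ (h₁.flow_zero X hX₁ ?_ e₀ he₀)
        rw [series_mid h₁ h₂ hdis hverts hX]
        exact outflow_of_zero hz₂
      have c₁ := Nat.sInf_mem (h₁.cover X hX₁)
      have c₂ := Nat.sInf_mem (h₂.cover X hX₂)
      rw [← widthIn_eq] at c₁ c₂
      have hkY := Nat.sInf_mem ((IsSP.series h₁ h₂ hdis hverts).cover Y hY)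
      rw [← widthIn_eq, Set.union_inter_distrib_right] at hkY
      obtain ⟨hg₁, hg₂⟩ := width_series_ge h₁ h₂ hdis hverts Set.inter_subset_left
        Set.inter_subset_left hkY
      calc widthIn src tgt s t (S₁ ∩ {e | X e ≠ 0} ∪ S₂ ∩ {e | X e ≠ 0})
          ≤ max (widthIn src tgt s u (S₁ ∩ {e | X e ≠ 0}))
              (widthIn src tgt u t (S₂ ∩ {e | X e ≠ 0})) :=
            widthIn_le (widthSet_series_combine c₁ c₂
              (widthSet_pos hne₁ c₁) (widthSet_pos hne₂ c₂))
        _ ≤ max (widthIn src tgt s u (S₁ ∩ {e | Y e ≠ 0}))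
              (widthIn src tgt u t (S₂ ∩ {e | Y e ≠ 0})) :=
            max_le_max (ih₁ X Y hX₁ hY₁ hXY) (ih₂ X Y hX₂ hY₂ hXY)
        _ ≤ widthIn src tgt s t (S₁ ∩ {e | Y e ≠ 0} ∪ S₂ ∩ {e | Y e ≠ 0}) :=
            max_le hg₁ hg₂

lemma IsFlowN.flowOn_univ {s t : V} {X : E → ℕ} [DecidableEq V]
    (h : IsFlowN src tgt s t X) : FlowOn src tgt Set.univ s t X := by
  intro v hvs hvt
  have h1 : inflow src tgt Set.univ v X = ∑ e, if tgt e = v then X e else 0 := by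
    unfold inflow
    refine Finset.sum_congr rfl fun e _ => ?_
    by_cases hc : tgt e = v <;> simp [hc]
  have h2 : outflow src tgt Set.univ v X = ∑ e, if src e = v then X e else 0 := by
    unfold outflow
    refine Finset.sum_congr rfl fun e _ => ?_
    by_cases hc : src e = v <;> simp [hc]
  rw [h1, h2]
  exact h v hvs hvt

end Main


/-- Every two-terminal series-parallel graph is width-stable. -/
theorem stmt_8 {V E : Type} [Fintype E] [DecidableEq V]
    (src tgt : E → V) (s t : V)
    (hsp : IsSP src tgt Set.univ s t) :
    ∀ X Y : E → ℕ, IsFlowN src tgt s t X → IsFlowN src tgt s t Y → (∀ e, X e ≤ Y e) →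
      widthIn src tgt s t {e | X e ≠ 0} ≤ widthIn src tgt s t {e | Y e ≠ 0} := by
  intro X Y hX hY hXY
  have := hsp.width_mono X Y hX.flowOn_univ hY.flowOn_univ hXY
  rwa [Set.univ_inter, Set.univ_inter] at this
end
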